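/- arXiv:2503.01070 — 11 statements merged into one kernel-verified Lean document; each statement's English description precedes it below -/
import Mathlib

section
/- Suppose zer(A+B+C) ≠ ∅. Then the sequence (x_k) generated by the AFBF algorithm with Stepsize Choice 1 is Fejér monotone with respect to zer(A+B+C); more precisely, for every z̄ ∈ zer(A+B+C) and every k ∈ ℕ, ‖x_{k+1} − z̄‖² ≤ ‖x_k − z̄‖² − (1 − α_max)‖x_k − p_k‖², and in particular ‖x_{k+1} − z̄‖ ≤ ‖x_k − z̄‖. -/
open scoped RealInnerProductSpace Pointwise
open Filter Topology
open scoped RealInnerProductSpace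

lemma proj_nonexp_aux {H : Type*} [NormedAddCommGroup H] [InnerProductSpace ℝ H]
    {K : Set H} (hK : Convex ℝ K) {w v : H} (hv : v ∈ K)
    (hmin : ∀ y ∈ K, ‖w - v‖ ≤ ‖w - y‖) {y : H} (hy : y ∈ K) :
    ‖v - y‖ ≤ ‖w - y‖ := by
  haveI : Nonempty K := ⟨⟨v, hv⟩⟩
  have hinf : ‖w - v‖ = ⨅ z : K, ‖w - z‖ := by
    apply le_antisymm
    · exact le_ciInf fun zz => hmin zz zz.2
    · exact ciInf_le ⟨0, fun r ⟨zz, hz⟩ => hz ▸ norm_nonneg _⟩ (⟨v, hv⟩ : K)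
  have hvar := (norm_eq_iInf_iff_real_inner_le_zero hK hv).mp hinf
  have h1 : ⟪w - v, y - v⟫ ≤ 0 := hvar y hy
  have e1 : ‖w - y‖ ^ 2 = ‖w - v‖ ^ 2 - 2 * ⟪w - v, y - v⟫ + ‖y - v‖ ^ 2 := by
    have := norm_sub_sq_real (w - v) (y - v)
    have h2 : (w - v) - (y - v) = w - y := by abel
    rw [h2] at this; linarith [this]
  have h3 : ‖v - y‖ = ‖y - v‖ := norm_sub_rev _ _
  have h4 : ‖v - y‖ ^ 2 ≤ ‖w - y‖ ^ 2 := by rw [h3]; nlinarith [sq_nonneg ‖w - v‖]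
  exact (pow_le_pow_iff_left₀ (norm_nonneg _) (norm_nonneg _) two_ne_zero).mp h4

set_option maxHeartbeats 800000

theorem afbf_fejer_monotone
    {H : Type*} [NormedAddCommGroup H] [InnerProductSpace ℝ H] [FiniteDimensional ℝ H]
    (A B : H → H) (C : H → Set H)
    (domC : Set H) (hdomC : domC = {x : H | (C x).Nonempty})
    (hdom_ne : domC.Nonempty) (hdom_closed : IsClosed domC) (hdom_conv : Convex ℝ domC)
    -- C is maximally monotone
    (hCmono : ∀ x y : H, ∀ u ∈ C x, ∀ v ∈ C y, 0 ≤ ⟪u - v, x - y⟫)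
    (hCmax : ∀ x u : H, (∀ y : H, ∀ v ∈ C y, 0 ≤ ⟪u - v, x - y⟫) → u ∈ C x)
    -- A is continuous on dom C
    (hAcont : ContinuousOn A domC)
    -- B is L-Lipschitz on dom C
    (L : ℝ) (hL : 0 < L)
    (hB : ∀ x ∈ domC, ∀ y ∈ domC, ‖B x - B y‖ ≤ L * ‖x - y‖)
    -- A + B + C is pseudo-monotone
    (hpseudo : ∀ x y : H,
      (∃ cx ∈ C x, 0 ≤ ⟪A x + B x + cx, y - x⟫) →
      ∀ cy ∈ C y, 0 ≤ ⟪A y + B y + cy, y - x⟫)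
    -- metric projection onto dom C
    (projC : H → H)
    (hproj_mem : ∀ w : H, projC w ∈ domC)
    (hproj_dist : ∀ w : H, ∀ y ∈ domC, ‖w - projC w‖ ≤ ‖w - y‖)
    -- resolvent of γ C : single-valued, defined on all of H
    (J : ℝ → H → H)
    (hJ : ∀ γ : ℝ, 0 < γ → ∀ zz pz : H, J γ zz = pz ↔ zz - pz ∈ γ • C pz)
    -- Assumption 1(v)
    (ζ τ : ℝ) (hζ : 0 < ζ) (hτ : 0 < τ)
    (hres : ∀ (uu w : H) (γ : ℝ), 0 < γ →
      ‖projC w - J γ (projC w - γ • uu)‖ ≤ γ * (ζ * ‖uu‖ + τ))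
    -- generalized Lipschitz condition on A with μ = 2
    (θ β : ℝ) (hθ : 2 ≤ θ) (hβ : 2 ≤ β)
    (a b c : H → ℝ)
    (ha_cont : Continuous a) (hb_cont : Continuous b) (hc_cont : Continuous c)
    (ha_nn : ∀ v : H, 0 ≤ a v) (hb_nn : ∀ v : H, 0 ≤ b v) (hc_nn : ∀ v : H, 0 ≤ c v)
    (hA : ∀ z₁ ∈ domC, ∀ z₂ ∈ domC,
      ‖A z₁ - A z₂‖ ^ 2 ≤
        a z₁ * ‖z₁ - z₂‖ ^ 2 + b z₁ * ‖z₁ - z₂‖ ^ θ + c z₁ * ‖z₁ - z₂‖ ^ β)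
    -- d(x) = ζ‖Ax + Bx‖ + τ
    (d : H → ℝ) (hd : ∀ v : H, d v = ζ * ‖A v + B v‖ + τ)
    -- Stepsize Choice 1
    (αmin αmax σ : ℝ) (hαmin : 0 < αmin) (hα_le : αmin ≤ αmax) (hαmax : αmax < 1)
    (hσ : 0 < σ)
    (α : ℕ → ℝ) (hα : ∀ k : ℕ, α k ∈ Set.Icc αmin αmax)
    (x z p qq xhat u : ℕ → H) (γ γbar : ℕ → ℝ)
    (hγbar_pos : ∀ k : ℕ, 0 < γbar k)
    (hγbar_eq : ∀ k : ℕ,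
      b (x k) * d (x k) ^ (θ - 2) * γbar k ^ θ
        + c (x k) * d (x k) ^ (β - 2) * γbar k ^ β
        + (L ^ 2 + a (x k)) * γbar k ^ 2 = α k / 2)
    (hγ_le : ∀ k : ℕ, σ ≤ γbar k → σ ≤ γ k ∧ γ k ≤ γbar k)
    (hγ_eq : ∀ k : ℕ, γbar k < σ → γ k = γbar k)
    -- AFBF iterations
    (hx0 : x 0 ∈ domC)
    (hz : ∀ k : ℕ, z k = x k - γ k • (A (x k) + B (x k)))
    (hp : ∀ k : ℕ, p k = J (γ k) (z k))
    (hq : ∀ k : ℕ, qq k = p k - γ k • (A (p k) + B (p k)))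
    (hxhat : ∀ k : ℕ, xhat k = qq k - z k + x k)
    (hx_succ : ∀ k : ℕ, x (k + 1) = projC (xhat k))
    (hu : ∀ k : ℕ, u k = (γ k)⁻¹ • (z k - p k) + A (p k) + B (p k))
    -- zer(A+B+C) ≠ ∅
    (hzer : ∃ zb : H, ∃ c0 ∈ C zb, A zb + B zb + c0 = 0) :
    ∀ zbar : H, (∃ c0 ∈ C zbar, A zbar + B zbar + c0 = 0) →
      ∀ k : ℕ,
        ‖x (k + 1) - zbar‖ ^ 2 ≤ ‖x k - zbar‖ ^ 2 - (1 - αmax) * ‖x k - p k‖ ^ 2 ∧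
        ‖x (k + 1) - zbar‖ ≤ ‖x k - zbar‖ := by
  intro zbar hzbar k
  obtain ⟨c0, hc0mem, hc0eq⟩ := hzbar
  have hzbar_dom : zbar ∈ domC := by rw [hdomC]; exact ⟨c0, hc0mem⟩
  -- x k ∈ domC for all k
  have hxmem : ∀ j : ℕ, x j ∈ domC := by
    intro j
    induction j with
    | zero => exact hx0
    | succ n _ => rw [hx_succ n]; exact hproj_mem _
  -- γ k is positive and ≤ γbar k
  have hγpos : 0 < γ k := by
    rcases le_or_gt σ (γbar k) with h | h
    · exact lt_of_lt_of_le hσ (hγ_le k h).1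
    · rw [hγ_eq k h]; exact hγbar_pos k
  have hγle : γ k ≤ γbar k := by
    rcases le_or_gt σ (γbar k) with h | h
    · exact (hγ_le k h).2
    · rw [hγ_eq k h]
  have hγne : γ k ≠ 0 := ne_of_gt hγpos
  -- resolvent: z k - p k ∈ γ k • C (p k)
  have hres_mem : z k - p k ∈ γ k • C (p k) :=
    (hJ (γ k) hγpos (z k) (p k)).mp (hp k).symm
  obtain ⟨c', hc'mem, hc'eq⟩ := hres_mem
  have hc'val : (γ k)⁻¹ • (z k - p k) = c' := by
    rw [← hc'eq, inv_smul_smul₀ hγne]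
  have hpmem : p k ∈ domC := by rw [hdomC]; exact ⟨c', hc'mem⟩
  -- pseudo-monotonicity: 0 ≤ ⟪u k, p k - zbar⟫
  have hpm : 0 ≤ ⟪u k, p k - zbar⟫ := by
    have h0 : (0:ℝ) ≤ ⟪A zbar + B zbar + c0, p k - zbar⟫ := by
      rw [hc0eq, inner_zero_left]
    have hexist : ∃ cx ∈ C zbar, 0 ≤ ⟪A zbar + B zbar + cx, p k - zbar⟫ :=
      ⟨c0, hc0mem, h0⟩
    have := hpseudo zbar (p k) hexist c' hc'mem
    have huk : u k = A (p k) + B (p k) + c' := by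
      rw [hu k, hc'val]; abel
    rw [huk]; exact this
  -- projC fixes points of domC
  have hprojfix : projC (x k) = x k := by
    have := hproj_dist (x k) (x k) (hxmem k)
    rw [sub_self, norm_zero] at this
    have : ‖x k - projC (x k)‖ = 0 := le_antisymm this (norm_nonneg _)
    have := norm_sub_eq_zero_iff.mp this
    exact this.symm
  -- d (x k) > 0
  have hdpos : 0 < d (x k) := by
    rw [hd]
    have : 0 ≤ ζ * ‖A (x k) + B (x k)‖ := mul_nonneg hζ.le (norm_nonneg _)
    linarith
  -- key distance bound: ‖x k - p k‖ ≤ γ k * d (x k)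
  set t := ‖x k - p k‖ with ht_def
  have ht_nn : 0 ≤ t := norm_nonneg _
  have htle : t ≤ γ k * d (x k) := by
    have h0 := hres (A (x k) + B (x k)) (x k) (γ k) hγpos
    rw [hprojfix, ← hz k, ← hp k] at h0
    rw [hd]
    exact h0
  set s := γ k * d (x k) with hs_def
  have hspos : 0 < s := mul_pos hγpos hdpos
  -- rpow bound: t ^ r ≤ s ^ (r - 2) * t ^ 2 for r ≥ 2
  have hrpow : ∀ r : ℝ, 2 ≤ r → t ^ r ≤ s ^ (r - 2) * t ^ 2 := by
    intro r hr
    rcases eq_or_lt_of_le ht_nn with h0 | h0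
    · rw [← h0, Real.zero_rpow (by linarith : r ≠ 0)]
      positivity
    · have h1 : t ^ r = t ^ (r - 2) * t ^ 2 := by
        rw [← Real.rpow_natCast t 2, ← Real.rpow_add h0]
        norm_num
      rw [h1]
      have h2 : t ^ (r - 2) ≤ s ^ (r - 2) :=
        Real.rpow_le_rpow ht_nn htle (by linarith)
      exact mul_le_mul_of_nonneg_right h2 (by positivity)
  -- s ^ (r-2) * γ k ^ 2 = d (x k) ^ (r-2) * γ k ^ r
  have hsplit : ∀ r : ℝ, 2 ≤ r →
      γ k ^ 2 * s ^ (r - 2) = d (x k) ^ (r - 2) * γ k ^ r := by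
    intro r hr
    have h4 : γ k ^ r = γ k ^ (r - 2) * γ k ^ (2:ℝ) := by
      rw [← Real.rpow_add hγpos]; norm_num
    have h5 : γ k ^ (2:ℝ) = γ k ^ (2:ℕ) := by
      rw [← Real.rpow_natCast (γ k) 2]; norm_num
    rw [hs_def, Real.mul_rpow hγpos.le hdpos.le, h4, h5]
    ring
  -- Lipschitz-type bounds
  have hAb : ‖A (x k) - A (p k)‖ ^ 2 ≤
      a (x k) * t ^ 2 + b (x k) * t ^ θ + c (x k) * t ^ β :=
    hA (x k) (hxmem k) (p k) hpmem
  have hBb : ‖B (x k) - B (p k)‖ ≤ L * t := hB (x k) (hxmem k) (p k) hpmem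
  set e := A (p k) + B (p k) - (A (x k) + B (x k)) with he_def
  have henorm : ‖e‖ ≤ ‖A (x k) - A (p k)‖ + ‖B (x k) - B (p k)‖ := by
    have : e = -((A (x k) - A (p k)) + (B (x k) - B (p k))) := by
      rw [he_def]; abel
    rw [this, norm_neg]
    exact norm_add_le _ _
  have he2 : ‖e‖ ^ 2 ≤ 2 * ‖A (x k) - A (p k)‖ ^ 2 + 2 * ‖B (x k) - B (p k)‖ ^ 2 := by
    nlinarith [norm_nonneg e, norm_nonneg (A (x k) - A (p k)),
      norm_nonneg (B (x k) - B (p k)),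
      sq_nonneg (‖A (x k) - A (p k)‖ - ‖B (x k) - B (p k)‖)]
  -- main step bound: γ k ^ 2 * ‖e‖ ^ 2 ≤ αmax * t ^ 2
  have hstep : γ k ^ 2 * ‖e‖ ^ 2 ≤ αmax * t ^ 2 := by
    have hbθ : γ k ^ 2 * (b (x k) * t ^ θ) ≤ b (x k) * d (x k) ^ (θ - 2) * γ k ^ θ * t ^ 2 := by
      have h1 := hrpow θ hθ
      have h2 := hsplit θ hθ
      calc γ k ^ 2 * (b (x k) * t ^ θ)
          ≤ γ k ^ 2 * (b (x k) * (s ^ (θ - 2) * t ^ 2)) := by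
            apply mul_le_mul_of_nonneg_left _ (by positivity)
            exact mul_le_mul_of_nonneg_left h1 (hb_nn _)
        _ = b (x k) * (γ k ^ 2 * s ^ (θ - 2)) * t ^ 2 := by ring
        _ = b (x k) * d (x k) ^ (θ - 2) * γ k ^ θ * t ^ 2 := by rw [h2]; ring
    have hcβ : γ k ^ 2 * (c (x k) * t ^ β) ≤ c (x k) * d (x k) ^ (β - 2) * γ k ^ β * t ^ 2 := by
      have h1 := hrpow β hβ
      have h2 := hsplit β hβ
      calc γ k ^ 2 * (c (x k) * t ^ β)
          ≤ γ k ^ 2 * (c (x k) * (s ^ (β - 2) * t ^ 2)) := by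
            apply mul_le_mul_of_nonneg_left _ (by positivity)
            exact mul_le_mul_of_nonneg_left h1 (hc_nn _)
        _ = c (x k) * (γ k ^ 2 * s ^ (β - 2)) * t ^ 2 := by ring
        _ = c (x k) * d (x k) ^ (β - 2) * γ k ^ β * t ^ 2 := by rw [h2]; ring
    have hB2 : ‖B (x k) - B (p k)‖ ^ 2 ≤ L ^ 2 * t ^ 2 := by
      nlinarith [norm_nonneg (B (x k) - B (p k)), mul_nonneg hL.le ht_nn]
    -- φ(γ k) ≤ φ(γbar k) = α k / 2
    have hmono : b (x k) * d (x k) ^ (θ - 2) * γ k ^ θ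
        + c (x k) * d (x k) ^ (β - 2) * γ k ^ β
        + (L ^ 2 + a (x k)) * γ k ^ 2 ≤ α k / 2 := by
      rw [← hγbar_eq k]
      have m1 : γ k ^ θ ≤ γbar k ^ θ := Real.rpow_le_rpow hγpos.le hγle (by linarith)
      have m2 : γ k ^ β ≤ γbar k ^ β := Real.rpow_le_rpow hγpos.le hγle (by linarith)
      have m3 : γ k ^ 2 ≤ γbar k ^ 2 := pow_le_pow_left₀ hγpos.le hγle 2
      have p1 : 0 ≤ b (x k) * d (x k) ^ (θ - 2) :=
        mul_nonneg (hb_nn _) (Real.rpow_nonneg hdpos.le _)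
      have p2 : 0 ≤ c (x k) * d (x k) ^ (β - 2) :=
        mul_nonneg (hc_nn _) (Real.rpow_nonneg hdpos.le _)
      have p3 : 0 ≤ L ^ 2 + a (x k) := add_nonneg (sq_nonneg L) (ha_nn _)
      have q1 := mul_le_mul_of_nonneg_left m1 p1
      have q2 := mul_le_mul_of_nonneg_left m2 p2
      have q3 := mul_le_mul_of_nonneg_left m3 p3
      linarith
    have hαk : α k ≤ αmax := (hα k).2
    calc γ k ^ 2 * ‖e‖ ^ 2
        ≤ γ k ^ 2 * (2 * ‖A (x k) - A (p k)‖ ^ 2 + 2 * ‖B (x k) - B (p k)‖ ^ 2) :=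
          mul_le_mul_of_nonneg_left he2 (by positivity)
      _ ≤ γ k ^ 2 * (2 * (a (x k) * t ^ 2 + b (x k) * t ^ θ + c (x k) * t ^ β)
            + 2 * (L ^ 2 * t ^ 2)) := by
          apply mul_le_mul_of_nonneg_left _ (by positivity)
          linarith
      _ = 2 * (γ k ^ 2 * (b (x k) * t ^ θ)) + 2 * (γ k ^ 2 * (c (x k) * t ^ β))
            + 2 * ((L ^ 2 + a (x k)) * γ k ^ 2) * t ^ 2 := by ring
      _ ≤ 2 * (b (x k) * d (x k) ^ (θ - 2) * γ k ^ θ * t ^ 2)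
            + 2 * (c (x k) * d (x k) ^ (β - 2) * γ k ^ β * t ^ 2)
            + 2 * ((L ^ 2 + a (x k)) * γ k ^ 2) * t ^ 2 := by linarith
      _ = 2 * (b (x k) * d (x k) ^ (θ - 2) * γ k ^ θ
            + c (x k) * d (x k) ^ (β - 2) * γ k ^ β
            + (L ^ 2 + a (x k)) * γ k ^ 2) * t ^ 2 := by ring
      _ ≤ 2 * (α k / 2) * t ^ 2 := by
          have := mul_le_mul_of_nonneg_right hmono (sq_nonneg t)
          linarith
      _ = α k * t ^ 2 := by ring
      _ ≤ αmax * t ^ 2 := mul_le_mul_of_nonneg_right hαk (sq_nonneg t)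
  -- geometric identities
  have hxhat2 : xhat k - zbar = (p k - zbar) - γ k • e := by
    rw [hxhat k, hq k, hz k, he_def]
    module
  have hγu : γ k • u k = (x k - p k) + γ k • e := by
    rw [hu k, smul_add, smul_add, smul_inv_smul₀ hγne, hz k, he_def]
    module
  -- inner product expansion
  have hpm2 : 0 ≤ ⟪x k - p k, p k - zbar⟫ + γ k * ⟪e, p k - zbar⟫ := by
    have h1 : (0:ℝ) ≤ ⟪γ k • u k, p k - zbar⟫ := by
      rw [real_inner_smul_left]
      exact mul_nonneg hγpos.le hpm
    rw [hγu, inner_add_left, real_inner_smul_left] at h1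
    exact h1
  have E1 : ‖xhat k - zbar‖ ^ 2 = ‖p k - zbar‖ ^ 2 - 2 * (γ k * ⟪e, p k - zbar⟫)
      + γ k ^ 2 * ‖e‖ ^ 2 := by
    rw [hxhat2, norm_sub_sq_real, real_inner_smul_right, norm_smul,
      Real.norm_eq_abs, abs_of_pos hγpos, mul_pow, real_inner_comm]
  have E2 : ‖x k - zbar‖ ^ 2 = t ^ 2 + 2 * ⟪x k - p k, p k - zbar⟫
      + ‖p k - zbar‖ ^ 2 := by
    have h : x k - zbar = (x k - p k) + (p k - zbar) := by abel
    rw [h, norm_add_sq_real]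
  -- Fejér inequality for xhat
  have hfejer : ‖xhat k - zbar‖ ^ 2 ≤ ‖x k - zbar‖ ^ 2 - (1 - αmax) * t ^ 2 := by
    rw [E1, E2]; linarith
  -- projection step
  have hproj_le : ‖x (k + 1) - zbar‖ ≤ ‖xhat k - zbar‖ := by
    rw [hx_succ k]
    exact proj_nonexp_aux hdom_conv (hproj_mem (xhat k))
      (hproj_dist (xhat k)) hzbar_dom
  constructor
  · calc ‖x (k + 1) - zbar‖ ^ 2 ≤ ‖xhat k - zbar‖ ^ 2 :=
        pow_le_pow_left₀ (norm_nonneg _) hproj_le 2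
      _ ≤ ‖x k - zbar‖ ^ 2 - (1 - αmax) * t ^ 2 := hfejer
  · have h1 : ‖x (k + 1) - zbar‖ ^ 2 ≤ ‖x k - zbar‖ ^ 2 := by
      have h2 : (0:ℝ) ≤ (1 - αmax) * t ^ 2 := by
        apply mul_nonneg (by linarith) (sq_nonneg _)
      calc ‖x (k + 1) - zbar‖ ^ 2 ≤ ‖xhat k - zbar‖ ^ 2 :=
          pow_le_pow_left₀ (norm_nonneg _) hproj_le 2
        _ ≤ ‖x k - zbar‖ ^ 2 - (1 - αmax) * t ^ 2 := hfejer
        _ ≤ ‖x k - zbar‖ ^ 2 := by linarith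
    exact (pow_le_pow_iff_left₀ (norm_nonneg _) (norm_nonneg _) two_ne_zero).mp h1
end

section
/- Suppose zer(A+B+C) ≠ ∅. Then for the sequences generated by the AFBF algorithm with Stepsize Choice 1 one has ∑_{k=0}^∞ ‖x_k − p_k‖² < ∞ and ∑_{k=0}^∞ ‖z_k − q_k‖² < ∞; moreover ‖z_k − q_k‖ ≤ (1 + √α_k)‖x_k − p_k‖ for every k ∈ ℕ. -/
open scoped RealInnerProductSpace Pointwise

/-!
Pseudo-monotonicity at a zero `zb` makes `⟪z k - qq k, p k - zb⟫` nonnegative, since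
`z k - qq k` is `γ k` times an element of `(A + B + C) (p k)`. Assumption 1(v) at `x k ∈ dom C` gives
`‖x k - p k‖ ≤ γ k * d (x k)`, which turns the growth condition on `A` into a quadratic one, and
then Stepsize Choice 1 bounds the forward error `E k = γ k • ((A + B) (x k) - (A + B) (p k))` by
`‖E k‖ ^ 2 ≤ α k * ‖x k - p k‖ ^ 2`. Expanding `xhat k - zb = (x k - zb) - (z k - qq k)` with
`z k - qq k = (x k - p k) - E k` yields the Fejér inequality
`‖x (k + 1) - zb‖ ^ 2 + (1 - αmax) * ‖x k - p k‖ ^ 2 ≤ ‖x k - zb‖ ^ 2`, whose telescoping sum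
gives the first claim; the other two follow from `‖E k‖ ≤ √(α k) * ‖x k - p k‖`.
-/

theorem norm_sub_le_one_add_sqrt_mul_norm {E : Type*} [SeminormedAddCommGroup E] {w e : E} {α : ℝ}
    (hE : ‖e‖ ^ 2 ≤ α * ‖w‖ ^ 2) : ‖w - e‖ ≤ (1 + √α) * ‖w‖ := by
  have hE' := Real.sqrt_le_sqrt hE
  rw [Real.sqrt_sq (norm_nonneg _), Real.sqrt_mul' _ (sq_nonneg _),
    Real.sqrt_sq (norm_nonneg _)] at hE'
  calc ‖w - e‖ ≤ ‖w‖ + ‖e‖ := norm_sub_le _ _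
    _ ≤ (1 + √α) * ‖w‖ := by linarith

theorem norm_sub_sq_le_four_mul_sq {E : Type*} [SeminormedAddCommGroup E] {w e : E} {α : ℝ}
    (hα : α ≤ 1) (hE : ‖e‖ ^ 2 ≤ α * ‖w‖ ^ 2) : ‖w - e‖ ^ 2 ≤ 4 * ‖w‖ ^ 2 := by
  have hsqrt : √α ≤ 1 := Real.sqrt_le_one.mpr hα
  calc ‖w - e‖ ^ 2 ≤ ((1 + √α) * ‖w‖) ^ 2 := by gcongr; exact norm_sub_le_one_add_sqrt_mul_norm hE
    _ ≤ (2 * ‖w‖) ^ 2 := by gcongr; linarith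
    _ = 4 * ‖w‖ ^ 2 := by ring

theorem summable_of_add_mul_le {V e : ℕ → ℝ} {κ : ℝ} (hκ : 0 < κ) (hV : ∀ n, 0 ≤ V n)
    (he : ∀ n, 0 ≤ e n) (h : ∀ n, V (n + 1) + κ * e n ≤ V n) : Summable e := by
  refine summable_of_sum_range_le he (c := V 0 / κ) fun n => ?_
  rw [le_div_iff₀' hκ, Finset.mul_sum]
  calc ∑ i ∈ Finset.range n, κ * e i ≤ ∑ i ∈ Finset.range n, (V i - V (i + 1)) :=
        Finset.sum_le_sum fun i _ => by linarith [h i]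
    _ = V 0 - V n := Finset.sum_range_sub' V n
    _ ≤ V 0 := sub_le_self _ (hV n)

theorem stepsize_pos_and_le {σ γ γbar : ℝ} (hσ : 0 < σ) (hγbar : 0 < γbar)
    (hle : σ ≤ γbar → σ ≤ γ ∧ γ ≤ γbar) (heq : γbar < σ → γ = γbar) : 0 < γ ∧ γ ≤ γbar := by
  rcases le_or_gt σ γbar with h | h
  · exact ⟨hσ.trans_le (hle h).1, (hle h).2⟩
  · rw [heq h]; exact ⟨hγbar, le_rfl⟩

theorem stepsize_poly_le_of_le {a b c L D θ β γ γ' : ℝ} (hθ : 0 ≤ θ) (hβ : 0 ≤ β) (ha : 0 ≤ a)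
    (hb : 0 ≤ b) (hc : 0 ≤ c) (hD : 0 ≤ D) (hγ : 0 ≤ γ) (hγγ' : γ ≤ γ') :
    b * D ^ (θ - 2) * γ ^ θ + c * D ^ (β - 2) * γ ^ β + (L ^ 2 + a) * γ ^ 2 ≤
      b * D ^ (θ - 2) * γ' ^ θ + c * D ^ (β - 2) * γ' ^ β + (L ^ 2 + a) * γ' ^ 2 := by
  have hbD := mul_nonneg hb (Real.rpow_nonneg hD (θ - 2))
  have hcD := mul_nonneg hc (Real.rpow_nonneg hD (β - 2))
  have hLa : 0 ≤ L ^ 2 + a := add_nonneg (sq_nonneg L) ha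
  gcongr

theorem sq_mul_rpow_le {γ D w e : ℝ} (hγ : 0 ≤ γ) (hD : 0 ≤ D) (hw : 0 ≤ w) (hwD : w ≤ γ * D)
    (he : 2 ≤ e) : γ ^ 2 * w ^ e ≤ D ^ (e - 2) * γ ^ e * w ^ 2 := by
  have hsplit : ∀ t : ℝ, 0 ≤ t → t ^ e = t ^ (e - 2) * t ^ 2 := fun t ht => by
    rw [← Real.rpow_natCast, ← Real.rpow_add' ht (by push_cast; linarith)]
    norm_num
  calc γ ^ 2 * w ^ e = w ^ (e - 2) * (γ ^ 2 * w ^ 2) := by rw [hsplit w hw]; ring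
    _ ≤ (γ * D) ^ (e - 2) * (γ ^ 2 * w ^ 2) := by gcongr
    _ = D ^ (e - 2) * γ ^ e * w ^ 2 := by rw [Real.mul_rpow hγ hD, hsplit γ hγ]; ring

theorem eq_of_forall_norm_sub_le {E : Type*} [NormedAddCommGroup E] {K : Set E} {w q : E}
    (hw : w ∈ K) (hmin : ∀ y ∈ K, ‖w - q‖ ≤ ‖w - y‖) : q = w := by
  have := hmin w hw
  rwa [sub_self, norm_zero, norm_le_zero_iff, sub_eq_zero, eq_comm] at this

section Hilbert

variable {H : Type*} [NormedAddCommGroup H] [InnerProductSpace ℝ H]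

theorem norm_sub_le_of_forall_norm_sub_le {K : Set H} (hK : Convex ℝ K) {w q y : H} (hq : q ∈ K)
    (hmin : ∀ y ∈ K, ‖w - q‖ ≤ ‖w - y‖) (hy : y ∈ K) : ‖q - y‖ ≤ ‖w - y‖ := by
  have : Nonempty K := ⟨⟨q, hq⟩⟩
  have hinf : ‖w - q‖ = ⨅ y : K, ‖w - y‖ :=
    le_antisymm (le_ciInf fun y => hmin y y.2)
      (ciInf_le ⟨0, by rintro _ ⟨y, rfl⟩; positivity⟩ (⟨q, hq⟩ : K))
  have hvi : ⟪w - q, y - q⟫ ≤ 0 := (norm_eq_iInf_iff_real_inner_le_zero hK hq).mp hinf y hy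
  have hexp : ‖w - y‖ ^ 2 = ‖w - q‖ ^ 2 - 2 * ⟪w - q, y - q⟫ + ‖q - y‖ ^ 2 := by
    rw [← norm_sub_rev y q, ← norm_sub_sq_real, sub_sub_sub_cancel_right]
  exact (sq_le_sq₀ (norm_nonneg _) (norm_nonneg _)).mp (by nlinarith [sq_nonneg ‖w - q‖])

theorem norm_sub_sub_sq_add_le {v w e : H} {α : ℝ} (he : ‖e‖ ^ 2 ≤ α * ‖w‖ ^ 2)
    (hinner : 0 ≤ ⟪w - e, v - w⟫) : ‖v - (w - e)‖ ^ 2 + (1 - α) * ‖w‖ ^ 2 ≤ ‖v‖ ^ 2 := by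
  have hid : ‖v - (w - e)‖ ^ 2 = ‖v‖ ^ 2 - ‖w‖ ^ 2 + ‖e‖ ^ 2 - 2 * ⟪w - e, v - w⟫ := by
    simp only [← real_inner_self_eq_norm_sq, inner_sub_left, inner_sub_right]
    linarith [real_inner_comm v w, real_inner_comm v e, real_inner_comm w e]
  linarith

theorem norm_smul_sub_sq_le_of_growth {A B : H → H} {x p : H} {a b c L D θ β γ α : ℝ}
    (hθ : 2 ≤ θ) (hβ : 2 ≤ β) (hb : 0 ≤ b) (hc : 0 ≤ c) (hγ : 0 ≤ γ) (hD : 0 ≤ D)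
    (hA : ‖A x - A p‖ ^ 2 ≤ a * ‖x - p‖ ^ 2 + b * ‖x - p‖ ^ θ + c * ‖x - p‖ ^ β)
    (hB : ‖B x - B p‖ ≤ L * ‖x - p‖) (hxp : ‖x - p‖ ≤ γ * D)
    (hstep : b * D ^ (θ - 2) * γ ^ θ + c * D ^ (β - 2) * γ ^ β + (L ^ 2 + a) * γ ^ 2 ≤ α / 2) :
    ‖γ • (A x + B x - (A p + B p))‖ ^ 2 ≤ α * ‖x - p‖ ^ 2 := by
  set w := ‖x - p‖
  have hw : 0 ≤ w := norm_nonneg _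
  have hB2 : ‖B x - B p‖ ^ 2 ≤ L ^ 2 * w ^ 2 := by
    rw [← mul_pow]; exact pow_le_pow_left₀ (norm_nonneg _) hB 2
  have hsum : ‖A x + B x - (A p + B p)‖ ^ 2 ≤ 2 * (‖A x - A p‖ ^ 2 + ‖B x - B p‖ ^ 2) :=
    calc _ ≤ (‖A x - A p‖ + ‖B x - B p‖) ^ 2 := by
          gcongr; rw [add_sub_add_comm]; exact norm_add_le _ _
      _ ≤ _ := add_sq_le
  have hθw := mul_le_mul_of_nonneg_left (sq_mul_rpow_le hγ hD hw hxp hθ) hb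
  have hβw := mul_le_mul_of_nonneg_left (sq_mul_rpow_le hγ hD hw hxp hβ) hc
  calc ‖γ • (A x + B x - (A p + B p))‖ ^ 2 = γ ^ 2 * ‖A x + B x - (A p + B p)‖ ^ 2 := by
        rw [norm_smul, Real.norm_of_nonneg hγ, mul_pow]
    _ ≤ 2 * (b * (γ ^ 2 * w ^ θ) + c * (γ ^ 2 * w ^ β) + (L ^ 2 + a) * γ ^ 2 * w ^ 2) := by
        nlinarith [sq_nonneg γ]
    _ ≤ 2 * ((b * D ^ (θ - 2) * γ ^ θ + c * D ^ (β - 2) * γ ^ β + (L ^ 2 + a) * γ ^ 2) *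
          w ^ 2) := by
        nlinarith
    _ ≤ α * w ^ 2 := by nlinarith [mul_le_mul_of_nonneg_right hstep (sq_nonneg w)]

theorem afbf_step_fejer {A B : H → H} {C : H → Set H}
    (hpseudo : ∀ x y : H, (∃ cx ∈ C x, 0 ≤ ⟪A x + B x + cx, y - x⟫) →
      ∀ cy ∈ C y, 0 ≤ ⟪A y + B y + cy, y - x⟫)
    {zb c0 : H} (hc0 : c0 ∈ C zb) (hzb : A zb + B zb + c0 = 0)
    {K : Set H} (hK : Convex ℝ K) (hzbK : zb ∈ K)
    {x z p q v x' : H} {γ α : ℝ} (hγ : 0 ≤ γ) (hz : z = x - γ • (A x + B x)) (hv : v ∈ C p)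
    (hzp : γ • v = z - p) (hq : q = p - γ • (A p + B p))
    (hE : ‖γ • (A x + B x - (A p + B p))‖ ^ 2 ≤ α * ‖x - p‖ ^ 2)
    (hx' : x' ∈ K) (hmin : ∀ y ∈ K, ‖q - z + x - x'‖ ≤ ‖q - z + x - y‖) :
    ‖x' - zb‖ ^ 2 + (1 - α) * ‖x - p‖ ^ 2 ≤ ‖x - zb‖ ^ 2 := by
  have hzq : z - q = x - p - γ • (A x + B x - (A p + B p)) := by
    rw [hz, hq, smul_sub]; abel
  have hinner : 0 ≤ ⟪z - q, p - zb⟫ := by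
    rw [show z - q = γ • (A p + B p + v) by rw [smul_add, hzp, hq]; abel, real_inner_smul_left]
    exact mul_nonneg hγ (hpseudo zb p ⟨c0, hc0, by rw [hzb, inner_zero_left]⟩ v hv)
  have hfejer := norm_sub_sub_sq_add_le (v := x - zb) hE
    (by rwa [← hzq, sub_sub_sub_cancel_left])
  rw [← hzq, show x - zb - (z - q) = q - z + x - zb by abel] at hfejer
  have hproj := norm_sub_le_of_forall_norm_sub_le hK hx' hmin hzbK
  nlinarith [pow_le_pow_left₀ (norm_nonneg _) hproj 2]

end Hilbert

theorem afbf_summability_general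
    {H : Type*} [NormedAddCommGroup H] [InnerProductSpace ℝ H]
    (A B : H → H) (C : H → Set H)
    (domC : Set H) (hdomC : domC = {x : H | (C x).Nonempty})
    (hdom_conv : Convex ℝ domC)
    -- B is L-Lipschitz on dom C
    (L : ℝ)
    (hB : ∀ x ∈ domC, ∀ y ∈ domC, ‖B x - B y‖ ≤ L * ‖x - y‖)
    -- A + B + C is pseudo-monotone
    (hpseudo : ∀ x y : H,
      (∃ cx ∈ C x, 0 ≤ ⟪A x + B x + cx, y - x⟫) →
      ∀ cy ∈ C y, 0 ≤ ⟪A y + B y + cy, y - x⟫)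
    -- metric projection onto dom C
    (projC : H → H)
    (hproj_mem : ∀ w : H, projC w ∈ domC)
    (hproj_dist : ∀ w : H, ∀ y ∈ domC, ‖w - projC w‖ ≤ ‖w - y‖)
    -- resolvent of γ C : single-valued, defined on all of H
    (J : ℝ → H → H)
    (hJ : ∀ γ : ℝ, 0 < γ → ∀ zz pz : H, J γ zz = pz ↔ zz - pz ∈ γ • C pz)
    -- Assumption 1(v)
    (ζ τ : ℝ)
    (hres : ∀ (uu w : H) (γ : ℝ), 0 < γ →
      ‖projC w - J γ (projC w - γ • uu)‖ ≤ γ * (ζ * ‖uu‖ + τ))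
    -- generalized Lipschitz condition on A with μ = 2
    (θ β : ℝ) (hθ : 2 ≤ θ) (hβ : 2 ≤ β)
    (a b c : H → ℝ)
    (ha_nn : ∀ v : H, 0 ≤ a v) (hb_nn : ∀ v : H, 0 ≤ b v) (hc_nn : ∀ v : H, 0 ≤ c v)
    (hA : ∀ z₁ ∈ domC, ∀ z₂ ∈ domC,
      ‖A z₁ - A z₂‖ ^ 2 ≤
        a z₁ * ‖z₁ - z₂‖ ^ 2 + b z₁ * ‖z₁ - z₂‖ ^ θ + c z₁ * ‖z₁ - z₂‖ ^ β)
    -- d(x) = ζ‖Ax + Bx‖ + τ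
    (d : H → ℝ) (hd : ∀ v : H, d v = ζ * ‖A v + B v‖ + τ)
    -- Stepsize Choice 1
    (αmin αmax σ : ℝ) (hαmax : αmax < 1)
    (hσ : 0 < σ)
    (α : ℕ → ℝ) (hα : ∀ k : ℕ, α k ∈ Set.Icc αmin αmax)
    (x z p qq xhat : ℕ → H) (γ γbar : ℕ → ℝ)
    (hγbar_pos : ∀ k : ℕ, 0 < γbar k)
    (hγbar_eq : ∀ k : ℕ,
      b (x k) * d (x k) ^ (θ - 2) * γbar k ^ θ
        + c (x k) * d (x k) ^ (β - 2) * γbar k ^ β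
        + (L ^ 2 + a (x k)) * γbar k ^ 2 = α k / 2)
    (hγ_le : ∀ k : ℕ, σ ≤ γbar k → σ ≤ γ k ∧ γ k ≤ γbar k)
    (hγ_eq : ∀ k : ℕ, γbar k < σ → γ k = γbar k)
    -- AFBF iterations
    (hx0 : x 0 ∈ domC)
    (hz : ∀ k : ℕ, z k = x k - γ k • (A (x k) + B (x k)))
    (hp : ∀ k : ℕ, p k = J (γ k) (z k))
    (hq : ∀ k : ℕ, qq k = p k - γ k • (A (p k) + B (p k)))
    (hxhat : ∀ k : ℕ, xhat k = qq k - z k + x k)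
    (hx_succ : ∀ k : ℕ, x (k + 1) = projC (xhat k))
    -- zer(A+B+C) ≠ ∅
    (hzer : ∃ zb : H, ∃ c0 ∈ C zb, A zb + B zb + c0 = 0) :
    Summable (fun k : ℕ => ‖x k - p k‖ ^ 2) ∧
    Summable (fun k : ℕ => ‖z k - qq k‖ ^ 2) ∧
    ∀ k : ℕ, ‖z k - qq k‖ ≤ (1 + Real.sqrt (α k)) * ‖x k - p k‖ := by
  obtain ⟨zb, c0, hc0, hzb⟩ := hzer
  have hx_dom : ∀ k, x k ∈ domC
    | 0 => hx0
    | k + 1 => hx_succ k ▸ hproj_mem _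
  have hγ k := stepsize_pos_and_le hσ (hγbar_pos k) (hγ_le k) (hγ_eq k)
  have hv : ∀ k, ∃ v ∈ C (p k), γ k • v = z k - p k := fun k =>
    Set.mem_smul_set.mp ((hJ _ (hγ k).1 _ _).mp (hp k).symm)
  have hxp : ∀ k, ‖x k - p k‖ ≤ γ k * d (x k) := fun k => by
    have := hres (A (x k) + B (x k)) (x k) (γ k) (hγ k).1
    rwa [eq_of_forall_norm_sub_le (hx_dom k) (hproj_dist _), ← hz, ← hp, ← hd] at this
  have hE : ∀ k, ‖γ k • (A (x k) + B (x k) - (A (p k) + B (p k)))‖ ^ 2 ≤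
      α k * ‖x k - p k‖ ^ 2 := fun k => by
    obtain ⟨v, hvC, -⟩ := hv k
    have hp_dom : p k ∈ domC := hdomC ▸ ⟨v, hvC⟩
    have hD : 0 ≤ d (x k) := nonneg_of_mul_nonneg_right ((norm_nonneg _).trans (hxp k)) (hγ k).1
    exact norm_smul_sub_sq_le_of_growth hθ hβ (hb_nn _) (hc_nn _) (hγ k).1.le hD
      (hA _ (hx_dom k) _ hp_dom) (hB _ (hx_dom k) _ hp_dom) (hxp k)
      ((stepsize_poly_le_of_le (by linarith) (by linarith) (ha_nn _) (hb_nn _) (hc_nn _) hD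
        (hγ k).1.le (hγ k).2).trans_eq (hγbar_eq k))
  have hzq : ∀ k, z k - qq k = x k - p k - γ k • (A (x k) + B (x k) - (A (p k) + B (p k))) :=
    fun k => by rw [hz, hq, smul_sub]; abel
  have hfejer : ∀ k, ‖x (k + 1) - zb‖ ^ 2 + (1 - αmax) * ‖x k - p k‖ ^ 2 ≤ ‖x k - zb‖ ^ 2 :=
    fun k => by
    obtain ⟨v, hvC, hvz⟩ := hv k
    have hmin : ∀ y ∈ domC, ‖qq k - z k + x k - x (k + 1)‖ ≤ ‖qq k - z k + x k - y‖ := by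
      rw [← hxhat, hx_succ]; exact hproj_dist _
    exact afbf_step_fejer hpseudo hc0 hzb hdom_conv (hdomC ▸ ⟨c0, hc0⟩) (hγ k).1.le (hz k) hvC
      hvz (hq k) ((hE k).trans (by gcongr; exact (hα k).2)) (hx_dom (k + 1)) hmin
  have hsum := summable_of_add_mul_le (V := fun k => ‖x k - zb‖ ^ 2) (sub_pos.2 hαmax)
    (fun _ => sq_nonneg _) (fun _ => sq_nonneg _) hfejer
  refine ⟨hsum, (hsum.mul_left 4).of_nonneg_of_le (fun _ => sq_nonneg _) fun k => ?_,
    fun k => ?_⟩ <;> rw [hzq k]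
  exacts [norm_sub_sq_le_four_mul_sq ((hα k).2.trans hαmax.le) (hE k),
    norm_sub_le_one_add_sqrt_mul_norm (hE k)]

theorem afbf_summability
    {H : Type*} [NormedAddCommGroup H] [InnerProductSpace ℝ H] [FiniteDimensional ℝ H]
    (A B : H → H) (C : H → Set H)
    (domC : Set H) (hdomC : domC = {x : H | (C x).Nonempty})
    (hdom_ne : domC.Nonempty) (hdom_closed : IsClosed domC) (hdom_conv : Convex ℝ domC)
    -- C is maximally monotone
    (hCmono : ∀ x y : H, ∀ u ∈ C x, ∀ v ∈ C y, 0 ≤ ⟪u - v, x - y⟫)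
    (hCmax : ∀ x u : H, (∀ y : H, ∀ v ∈ C y, 0 ≤ ⟪u - v, x - y⟫) → u ∈ C x)
    -- A is continuous on dom C
    (hAcont : ContinuousOn A domC)
    -- B is L-Lipschitz on dom C
    (L : ℝ) (hL : 0 < L)
    (hB : ∀ x ∈ domC, ∀ y ∈ domC, ‖B x - B y‖ ≤ L * ‖x - y‖)
    -- A + B + C is pseudo-monotone
    (hpseudo : ∀ x y : H,
      (∃ cx ∈ C x, 0 ≤ ⟪A x + B x + cx, y - x⟫) →
      ∀ cy ∈ C y, 0 ≤ ⟪A y + B y + cy, y - x⟫)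
    -- metric projection onto dom C
    (projC : H → H)
    (hproj_mem : ∀ w : H, projC w ∈ domC)
    (hproj_dist : ∀ w : H, ∀ y ∈ domC, ‖w - projC w‖ ≤ ‖w - y‖)
    -- resolvent of γ C : single-valued, defined on all of H
    (J : ℝ → H → H)
    (hJ : ∀ γ : ℝ, 0 < γ → ∀ zz pz : H, J γ zz = pz ↔ zz - pz ∈ γ • C pz)
    -- Assumption 1(v)
    (ζ τ : ℝ) (hζ : 0 < ζ) (hτ : 0 < τ)
    (hres : ∀ (uu w : H) (γ : ℝ), 0 < γ →
      ‖projC w - J γ (projC w - γ • uu)‖ ≤ γ * (ζ * ‖uu‖ + τ))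
    -- generalized Lipschitz condition on A with μ = 2
    (θ β : ℝ) (hθ : 2 ≤ θ) (hβ : 2 ≤ β)
    (a b c : H → ℝ)
    (ha_cont : Continuous a) (hb_cont : Continuous b) (hc_cont : Continuous c)
    (ha_nn : ∀ v : H, 0 ≤ a v) (hb_nn : ∀ v : H, 0 ≤ b v) (hc_nn : ∀ v : H, 0 ≤ c v)
    (hA : ∀ z₁ ∈ domC, ∀ z₂ ∈ domC,
      ‖A z₁ - A z₂‖ ^ 2 ≤
        a z₁ * ‖z₁ - z₂‖ ^ 2 + b z₁ * ‖z₁ - z₂‖ ^ θ + c z₁ * ‖z₁ - z₂‖ ^ β)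
    -- d(x) = ζ‖Ax + Bx‖ + τ
    (d : H → ℝ) (hd : ∀ v : H, d v = ζ * ‖A v + B v‖ + τ)
    -- Stepsize Choice 1
    (αmin αmax σ : ℝ) (hαmin : 0 < αmin) (hα_le : αmin ≤ αmax) (hαmax : αmax < 1)
    (hσ : 0 < σ)
    (α : ℕ → ℝ) (hα : ∀ k : ℕ, α k ∈ Set.Icc αmin αmax)
    (x z p qq xhat u : ℕ → H) (γ γbar : ℕ → ℝ)
    (hγbar_pos : ∀ k : ℕ, 0 < γbar k)
    (hγbar_eq : ∀ k : ℕ,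
      b (x k) * d (x k) ^ (θ - 2) * γbar k ^ θ
        + c (x k) * d (x k) ^ (β - 2) * γbar k ^ β
        + (L ^ 2 + a (x k)) * γbar k ^ 2 = α k / 2)
    (hγ_le : ∀ k : ℕ, σ ≤ γbar k → σ ≤ γ k ∧ γ k ≤ γbar k)
    (hγ_eq : ∀ k : ℕ, γbar k < σ → γ k = γbar k)
    -- AFBF iterations
    (hx0 : x 0 ∈ domC)
    (hz : ∀ k : ℕ, z k = x k - γ k • (A (x k) + B (x k)))
    (hp : ∀ k : ℕ, p k = J (γ k) (z k))
    (hq : ∀ k : ℕ, qq k = p k - γ k • (A (p k) + B (p k)))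
    (hxhat : ∀ k : ℕ, xhat k = qq k - z k + x k)
    (hx_succ : ∀ k : ℕ, x (k + 1) = projC (xhat k))
    (hu : ∀ k : ℕ, u k = (γ k)⁻¹ • (z k - p k) + A (p k) + B (p k))
    -- zer(A+B+C) ≠ ∅
    (hzer : ∃ zb : H, ∃ c0 ∈ C zb, A zb + B zb + c0 = 0) :
    Summable (fun k : ℕ => ‖x k - p k‖ ^ 2) ∧
    Summable (fun k : ℕ => ‖z k - qq k‖ ^ 2) ∧
    ∀ k : ℕ, ‖z k - qq k‖ ≤ (1 + Real.sqrt (α k)) * ‖x k - p k‖ :=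
  afbf_summability_general A B C domC hdomC hdom_conv L hB hpseudo projC hproj_mem hproj_dist J hJ ζ
    τ hres θ β hθ hβ a b c ha_nn hb_nn hc_nn hA d hd αmin αmax σ hαmax hσ α hα x z p qq xhat γ γbar
    hγbar_pos hγbar_eq hγ_le hγ_eq hx0 hz hp hq hxhat hx_succ hzer
end

section
/- Suppose zer(A+B+C) ≠ ∅. Then there exists z̄ ∈ zer(A+B+C) such that the sequences generated by the AFBF algorithm with Stepsize Choice 1 satisfy x_k → z̄, p_k → z̄, and u_k → 0. -/
open scoped RealInnerProductSpace Pointwise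
open Filter Topology

private lemma sq_le_of_sq {aa bb : ℝ} (hb : 0 ≤ bb) (h : aa ^ 2 ≤ bb ^ 2) (ha : 0 ≤ aa) :
    aa ≤ bb := by nlinarith

private lemma aux_rpow {t s e : ℝ} (ht : 0 ≤ t) (hts : t ≤ s) (hs : 0 < s) (he : 2 ≤ e) :
    t ^ e ≤ s ^ (e - 2) * t ^ 2 := by
  rcases eq_or_lt_of_le ht with h0 | h0
  · rw [← h0, Real.zero_rpow (by linarith : e ≠ 0)]
    positivity
  · have h1 : t ^ e = t ^ (e - 2) * t ^ (2:ℕ) := by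
      rw [← Real.rpow_natCast t 2, ← Real.rpow_add h0]
      norm_num
    rw [h1]
    have h2 : t ^ (e - 2) ≤ s ^ (e - 2) := Real.rpow_le_rpow ht hts (by linarith)
    exact mul_le_mul_of_nonneg_right h2 (by positivity)

private lemma aux2 {g dd e t : ℝ} (hg : 0 < g) (hd : 0 < dd) (he : 2 ≤ e) (ht : 0 ≤ t)
    (hts : t ≤ g * dd) : g ^ 2 * t ^ e ≤ dd ^ (e - 2) * g ^ e * t ^ 2 := by
  have h1 : t ^ e ≤ (g * dd) ^ (e - 2) * t ^ 2 := aux_rpow ht hts (by positivity) he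
  have h2 : (g * dd) ^ (e - 2) = g ^ (e - 2) * dd ^ (e - 2) := Real.mul_rpow hg.le hd.le
  have h3 : g ^ (2:ℕ) * g ^ (e - 2) = g ^ e := by
    rw [← Real.rpow_natCast g 2, ← Real.rpow_add hg]
    norm_num
  calc g ^ 2 * t ^ e ≤ g ^ 2 * ((g * dd) ^ (e - 2) * t ^ 2) :=
        mul_le_mul_of_nonneg_left h1 (by positivity)
    _ = dd ^ (e - 2) * (g ^ (2:ℕ) * g ^ (e - 2)) * t ^ 2 := by rw [h2]; ring
    _ = dd ^ (e - 2) * g ^ e * t ^ 2 := by rw [h3]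

set_option maxHeartbeats 2000000 in
theorem afbf_convergence
    {H : Type*} [NormedAddCommGroup H] [InnerProductSpace ℝ H] [FiniteDimensional ℝ H]
    (A B : H → H) (C : H → Set H)
    (domC : Set H) (hdomC : domC = {x : H | (C x).Nonempty})
    (hdom_ne : domC.Nonempty) (hdom_closed : IsClosed domC) (hdom_conv : Convex ℝ domC)
    -- C is maximally monotone
    (hCmono : ∀ x y : H, ∀ u ∈ C x, ∀ v ∈ C y, 0 ≤ ⟪u - v, x - y⟫)
    (hCmax : ∀ x u : H, (∀ y : H, ∀ v ∈ C y, 0 ≤ ⟪u - v, x - y⟫) → u ∈ C x)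
    -- A is continuous on dom C
    (hAcont : ContinuousOn A domC)
    -- B is L-Lipschitz on dom C
    (L : ℝ) (hL : 0 < L)
    (hB : ∀ x ∈ domC, ∀ y ∈ domC, ‖B x - B y‖ ≤ L * ‖x - y‖)
    -- A + B + C is pseudo-monotone
    (hpseudo : ∀ x y : H,
      (∃ cx ∈ C x, 0 ≤ ⟪A x + B x + cx, y - x⟫) →
      ∀ cy ∈ C y, 0 ≤ ⟪A y + B y + cy, y - x⟫)
    -- metric projection onto dom C
    (projC : H → H)
    (hproj_mem : ∀ w : H, projC w ∈ domC)
    (hproj_dist : ∀ w : H, ∀ y ∈ domC, ‖w - projC w‖ ≤ ‖w - y‖)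
    -- resolvent of γ C : single-valued, defined on all of H
    (J : ℝ → H → H)
    (hJ : ∀ γ : ℝ, 0 < γ → ∀ zz pz : H, J γ zz = pz ↔ zz - pz ∈ γ • C pz)
    -- Assumption 1(v)
    (ζ τ : ℝ) (hζ : 0 < ζ) (hτ : 0 < τ)
    (hres : ∀ (uu w : H) (γ : ℝ), 0 < γ →
      ‖projC w - J γ (projC w - γ • uu)‖ ≤ γ * (ζ * ‖uu‖ + τ))
    -- generalized Lipschitz condition on A with μ = 2
    (θ β : ℝ) (hθ : 2 ≤ θ) (hβ : 2 ≤ β)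
    (a b c : H → ℝ)
    (ha_cont : Continuous a) (hb_cont : Continuous b) (hc_cont : Continuous c)
    (ha_nn : ∀ v : H, 0 ≤ a v) (hb_nn : ∀ v : H, 0 ≤ b v) (hc_nn : ∀ v : H, 0 ≤ c v)
    (hA : ∀ z₁ ∈ domC, ∀ z₂ ∈ domC,
      ‖A z₁ - A z₂‖ ^ 2 ≤
        a z₁ * ‖z₁ - z₂‖ ^ 2 + b z₁ * ‖z₁ - z₂‖ ^ θ + c z₁ * ‖z₁ - z₂‖ ^ β)
    -- d(x) = ζ‖Ax + Bx‖ + τ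
    (d : H → ℝ) (hd : ∀ v : H, d v = ζ * ‖A v + B v‖ + τ)
    -- Stepsize Choice 1
    (αmin αmax σ : ℝ) (hαmin : 0 < αmin) (hα_le : αmin ≤ αmax) (hαmax : αmax < 1)
    (hσ : 0 < σ)
    (α : ℕ → ℝ) (hα : ∀ k : ℕ, α k ∈ Set.Icc αmin αmax)
    (x z p qq xhat u : ℕ → H) (γ γbar : ℕ → ℝ)
    (hγbar_pos : ∀ k : ℕ, 0 < γbar k)
    (hγbar_eq : ∀ k : ℕ,
      b (x k) * d (x k) ^ (θ - 2) * γbar k ^ θ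
        + c (x k) * d (x k) ^ (β - 2) * γbar k ^ β
        + (L ^ 2 + a (x k)) * γbar k ^ 2 = α k / 2)
    (hγ_le : ∀ k : ℕ, σ ≤ γbar k → σ ≤ γ k ∧ γ k ≤ γbar k)
    (hγ_eq : ∀ k : ℕ, γbar k < σ → γ k = γbar k)
    -- AFBF iterations
    (hx0 : x 0 ∈ domC)
    (hz : ∀ k : ℕ, z k = x k - γ k • (A (x k) + B (x k)))
    (hp : ∀ k : ℕ, p k = J (γ k) (z k))
    (hq : ∀ k : ℕ, qq k = p k - γ k • (A (p k) + B (p k)))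
    (hxhat : ∀ k : ℕ, xhat k = qq k - z k + x k)
    (hx_succ : ∀ k : ℕ, x (k + 1) = projC (xhat k))
    (hu : ∀ k : ℕ, u k = (γ k)⁻¹ • (z k - p k) + A (p k) + B (p k))
    -- zer(A+B+C) ≠ ∅
    (hzer : ∃ zb : H, ∃ c0 ∈ C zb, A zb + B zb + c0 = 0) :
    ∃ zbar : H, (∃ c0 ∈ C zbar, A zbar + B zbar + c0 = 0) ∧
      Tendsto x atTop (𝓝 zbar) ∧
      Tendsto p atTop (𝓝 zbar) ∧
      Tendsto u atTop (𝓝 (0 : H)) := by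
  -- basic facts
  have hzdom : ∀ zb : H, (∃ c0 ∈ C zb, A zb + B zb + c0 = 0) → zb ∈ domC := by
    rintro zb ⟨c0, hc0, -⟩; rw [hdomC]; exact ⟨c0, hc0⟩
  have hproj_self : ∀ w ∈ domC, projC w = w := by
    intro w hw
    have h := hproj_dist w w hw
    simp only [sub_self, norm_zero] at h
    have := le_antisymm h (norm_nonneg _)
    rw [norm_eq_zero, sub_eq_zero] at this
    exact this.symm
  have hproj_firm : ∀ (w : H), ∀ y ∈ domC, ‖projC w - y‖ ≤ ‖w - y‖ := by
    intro w y hy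
    have hne : Nonempty domC := hdom_ne.to_subtype
    have hiInf : ‖w - projC w‖ = ⨅ q : domC, ‖w - (q:H)‖ := by
      apply le_antisymm
      · exact le_ciInf fun q => hproj_dist w q q.2
      · have hbdd : BddBelow (Set.range fun q : domC => ‖w - (q:H)‖) :=
          ⟨0, by rintro r ⟨q, rfl⟩; positivity⟩
        exact ciInf_le hbdd ⟨projC w, hproj_mem w⟩
    have hVI := (norm_eq_iInf_iff_real_inner_le_zero hdom_conv (hproj_mem w)).mp hiInf
    have h1 : ⟪w - projC w, y - projC w⟫ ≤ 0 := hVI y hy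
    have h2 : ‖w - y‖ ^ 2 = ‖w - projC w‖ ^ 2 - 2 * ⟪w - projC w, y - projC w⟫
        + ‖y - projC w‖ ^ 2 := by
      have := norm_sub_sq_real (w - projC w) (y - projC w)
      rw [show w - projC w - (y - projC w) = w - y by abel] at this
      exact this
    have h3 : ‖projC w - y‖ ^ 2 ≤ ‖w - y‖ ^ 2 := by
      rw [show ‖projC w - y‖ = ‖y - projC w‖ from norm_sub_rev _ _]
      nlinarith [norm_nonneg (w - projC w), sq_nonneg (‖w - projC w‖)]
    exact sq_le_of_sq (norm_nonneg _) h3 (norm_nonneg _)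
  have hγpos : ∀ k, 0 < γ k ∧ γ k ≤ γbar k := by
    intro k
    by_cases h : σ ≤ γbar k
    · exact ⟨lt_of_lt_of_le hσ (hγ_le k h).1, (hγ_le k h).2⟩
    · push_neg at h
      rw [hγ_eq k h]
      exact ⟨hγbar_pos k, le_refl _⟩
  have hxdom : ∀ k, x k ∈ domC := by
    intro k
    cases k with
    | zero => exact hx0
    | succ n => rw [hx_succ n]; exact hproj_mem _
  have hCp : ∀ k, (γ k)⁻¹ • (z k - p k) ∈ C (p k) := by
    intro k
    have h := (hJ (γ k) (hγpos k).1 (z k) (p k)).mp (hp k).symm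
    rcases h with ⟨v, hv, hvx⟩
    have : (γ k)⁻¹ • (z k - p k) = v := by
      rw [← hvx, smul_smul, inv_mul_cancel₀ (hγpos k).1.ne', one_smul]
    rw [this]; exact hv
  have hpdom : ∀ k, p k ∈ domC := by
    intro k; rw [hdomC]; exact ⟨_, hCp k⟩
  have hd_pos : ∀ v : H, 0 < d v := by intro v; rw [hd]; positivity
  have hxple : ∀ k, ‖x k - p k‖ ≤ γ k * d (x k) := by
    intro k
    have h := hres (A (x k) + B (x k)) (x k) (γ k) (hγpos k).1
    rw [hproj_self _ (hxdom k), ← hz k, ← hp k, ← hd (x k)] at h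
    exact h
  -- γ • u and xhat identities
  have hgu : ∀ k, γ k • u k =
      (x k - p k) - γ k • ((A (x k) + B (x k)) - (A (p k) + B (p k))) := by
    intro k
    rw [hu k, hz k]
    rw [smul_add, smul_add, smul_smul, mul_inv_cancel₀ (hγpos k).1.ne', one_smul]
    module
  have hxhat_eq : ∀ k, xhat k = x k - γ k • u k := by
    intro k
    rw [hxhat k, hq k, hz k, hgu k]
    module
  -- stepsize bound
  have hwb : ∀ k, (γ k)^2 * ‖(A (x k) + B (x k)) - (A (p k) + B (p k))‖^2
      ≤ α k * ‖x k - p k‖^2 := by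
    intro k
    have hg := (hγpos k).1
    have htd : ‖x k - p k‖ ≤ γ k * d (x k) := hxple k
    have hAb := hA (x k) (hxdom k) (p k) (hpdom k)
    have hBb := hB (x k) (hxdom k) (p k) (hpdom k)
    have hθb : (γ k)^2 * ‖x k - p k‖^θ ≤ d (x k) ^ (θ-2) * γ k ^ θ * ‖x k - p k‖^2 :=
      aux2 hg (hd_pos (x k)) hθ (norm_nonneg _) htd
    have hβb : (γ k)^2 * ‖x k - p k‖^β ≤ d (x k) ^ (β-2) * γ k ^ β * ‖x k - p k‖^2 :=
      aux2 hg (hd_pos (x k)) hβ (norm_nonneg _) htd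
    have hstep : b (x k) * d (x k) ^ (θ-2) * γ k ^ θ + c (x k) * d (x k) ^ (β-2) * γ k ^ β
        + (L^2 + a (x k)) * γ k ^ 2 ≤ α k / 2 := by
      rw [← hγbar_eq k]
      have e1 : γ k ^ θ ≤ γbar k ^ θ := Real.rpow_le_rpow hg.le (hγpos k).2 (by linarith)
      have e2 : γ k ^ β ≤ γbar k ^ β := Real.rpow_le_rpow hg.le (hγpos k).2 (by linarith)
      have e3 : γ k ^ 2 ≤ γbar k ^ 2 := by nlinarith [(hγpos k).2, hg.le]
      have nb : 0 ≤ b (x k) * d (x k) ^ (θ-2) :=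
        mul_nonneg (hb_nn _) (Real.rpow_nonneg (hd_pos _).le _)
      have nc : 0 ≤ c (x k) * d (x k) ^ (β-2) :=
        mul_nonneg (hc_nn _) (Real.rpow_nonneg (hd_pos _).le _)
      have na : (0:ℝ) ≤ L^2 + a (x k) := add_nonneg (sq_nonneg L) (ha_nn _)
      have t1 : b (x k) * d (x k) ^ (θ-2) * γ k ^ θ ≤ b (x k) * d (x k) ^ (θ-2) * γbar k ^ θ :=
        mul_le_mul_of_nonneg_left e1 nb
      have t2 : c (x k) * d (x k) ^ (β-2) * γ k ^ β ≤ c (x k) * d (x k) ^ (β-2) * γbar k ^ β :=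
        mul_le_mul_of_nonneg_left e2 nc
      have t3 : (L^2 + a (x k)) * γ k ^ 2 ≤ (L^2 + a (x k)) * γbar k ^ 2 :=
        mul_le_mul_of_nonneg_left e3 na
      linarith
    have h1 : ‖(A (x k) + B (x k)) - (A (p k) + B (p k))‖ ≤
        ‖A (x k) - A (p k)‖ + ‖B (x k) - B (p k)‖ := by
      have he : (A (x k) + B (x k)) - (A (p k) + B (p k))
          = (A (x k) - A (p k)) + (B (x k) - B (p k)) := by abel
      rw [he]; exact norm_add_le _ _
    have h2 : ‖(A (x k) + B (x k)) - (A (p k) + B (p k))‖^2 ≤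
        2*‖A (x k) - A (p k)‖^2 + 2*(L*‖x k - p k‖)^2 := by
      nlinarith [norm_nonneg ((A (x k) + B (x k)) - (A (p k) + B (p k))),
        norm_nonneg (A (x k) - A (p k)), norm_nonneg (B (x k) - B (p k)),
        norm_nonneg (x k - p k), h1, hBb,
        sq_nonneg (‖A (x k) - A (p k)‖ - L*‖x k - p k‖),
        sq_nonneg (‖A (x k) - A (p k)‖ + ‖B (x k) - B (p k)‖)]
    have h3 : (γ k)^2 * ‖A (x k) - A (p k)‖^2 ≤
        a (x k) * ((γ k)^2 * ‖x k - p k‖^2)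
        + b (x k) * (d (x k) ^ (θ-2) * γ k ^ θ * ‖x k - p k‖^2)
        + c (x k) * (d (x k) ^ (β-2) * γ k ^ β * ‖x k - p k‖^2) := by
      have hs := mul_le_mul_of_nonneg_left hAb (sq_nonneg (γ k))
      have hb' := mul_le_mul_of_nonneg_left hθb (hb_nn (x k))
      have hc' := mul_le_mul_of_nonneg_left hβb (hc_nn (x k))
      linarith [hs, hb', hc']
    have hst := mul_le_mul_of_nonneg_right hstep (sq_nonneg ‖x k - p k‖)
    have h2' := mul_le_mul_of_nonneg_left h2 (sq_nonneg (γ k))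
    linarith [h2', h3, hst]
  -- key Fejér inequality
  have key : ∀ zb : H, (∃ c0 ∈ C zb, A zb + B zb + c0 = 0) → ∀ k,
      ‖x (k+1) - zb‖^2 ≤ ‖x k - zb‖^2 - (1 - α k) * ‖x k - p k‖^2 := by
    intro zb hzb k
    obtain ⟨c0, hc0, hc0eq⟩ := hzb
    have hg := (hγpos k).1
    have hps : 0 ≤ ⟪u k, p k - zb⟫ := by
      have hpm := hpseudo zb (p k) ⟨c0, hc0, by rw [hc0eq]; simp⟩
        ((γ k)⁻¹ • (z k - p k)) (hCp k)
      have he : u k = A (p k) + B (p k) + (γ k)⁻¹ • (z k - p k) := by rw [hu k]; abel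
      rw [he]; exact hpm
    have hwbk := hwb k
    set w := (A (x k) + B (x k)) - (A (p k) + B (p k)) with hwdef
    have E : ‖xhat k - zb‖^2 = ‖x k - zb‖^2 - 2 * ⟪x k - zb, γ k • u k⟫ + ‖γ k • u k‖^2 := by
      rw [hxhat_eq k, show x k - γ k • u k - zb = (x k - zb) - γ k • u k by abel]
      exact norm_sub_sq_real _ _
    have i1 : ⟪x k - zb, γ k • u k⟫ = ⟪x k - p k, γ k • u k⟫ + γ k * ⟪u k, p k - zb⟫ := by
      rw [show x k - zb = (x k - p k) + (p k - zb) by abel, inner_add_left]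
      congr 1
      rw [real_inner_smul_right, real_inner_comm]
    have i3 : ⟪x k - p k, γ k • u k⟫ = ‖x k - p k‖^2 - ⟪x k - p k, γ k • w⟫ := by
      rw [hgu k, ← hwdef, inner_sub_right, real_inner_self_eq_norm_sq]
    have i4 : ‖γ k • u k‖^2 = ‖x k - p k‖^2 - 2*⟪x k - p k, γ k • w⟫ + ‖γ k • w‖^2 := by
      rw [hgu k, ← hwdef]
      exact norm_sub_sq_real _ _
    have i5 : ‖γ k • w‖^2 = (γ k)^2 * ‖w‖^2 := by
      rw [norm_smul, Real.norm_eq_abs, mul_pow, sq_abs]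
    have hfirm : ‖x (k+1) - zb‖ ≤ ‖xhat k - zb‖ := by
      rw [hx_succ k]; exact hproj_firm _ _ (hzdom zb ⟨c0, hc0, hc0eq⟩)
    have hfirm2 : ‖x (k+1) - zb‖^2 ≤ ‖xhat k - zb‖^2 :=
      pow_le_pow_left₀ (norm_nonneg _) hfirm 2
    linarith [E, i1, i3, i4, i5, hwbk, hfirm2, mul_nonneg hg.le hps]
  -- a fixed zero
  obtain ⟨zb0, hzb0⟩ := hzer
  -- Fejér monotonicity of distances to any zero
  have hantitone : ∀ zb : H, (∃ c0 ∈ C zb, A zb + B zb + c0 = 0) →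
      ∀ j l, j ≤ l → ‖x l - zb‖ ≤ ‖x j - zb‖ := by
    intro zb hzb
    have hstep : ∀ k, ‖x (k+1) - zb‖ ≤ ‖x k - zb‖ := by
      intro k
      have hk := key zb hzb k
      have h1 : 0 ≤ (1 - α k) * ‖x k - p k‖^2 :=
        mul_nonneg (by linarith [(hα k).2]) (sq_nonneg _)
      exact sq_le_of_sq (norm_nonneg _) (by linarith) (norm_nonneg _)
    intro j l hjl
    induction l, hjl using Nat.le_induction with
    | base => exact le_refl _
    | succ n hmn ih => exact le_trans (hstep n) ih
  have hballdom : ∀ k, x k ∈ Metric.closedBall zb0 (‖x 0 - zb0‖) ∩ domC := by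
    intro k
    refine ⟨?_, hxdom k⟩
    rw [Metric.mem_closedBall, dist_eq_norm]
    exact hantitone zb0 hzb0 0 k (Nat.zero_le k)
  haveI : ProperSpace H := FiniteDimensional.proper ℝ H
  have hKcomp : IsCompact (Metric.closedBall zb0 (‖x 0 - zb0‖) ∩ domC) :=
    (isCompact_closedBall _ _).inter_right hdom_closed
  -- continuity facts
  have hBcont : ContinuousOn B domC := by
    apply LipschitzOnWith.continuousOn (K := Real.toNNReal L)
    apply LipschitzOnWith.of_dist_le_mul
    intro v hv y hy
    rw [dist_eq_norm, dist_eq_norm, Real.coe_toNNReal L hL.le]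
    exact hB v hv y hy
  have hdcont : ContinuousOn d domC := by
    have hdf : d = fun v => ζ * ‖A v + B v‖ + τ := funext hd
    rw [hdf]
    exact (continuousOn_const.mul (hAcont.add hBcont).norm).add continuousOn_const
  have hFcont : ContinuousOn
      (fun v => (L^2 + a v) + b v * d v ^ (θ-2) + c v * d v ^ (β-2) + d v) domC := by
    refine ContinuousOn.add (ContinuousOn.add (ContinuousOn.add ?_ ?_) ?_) hdcont
    · exact continuousOn_const.add ha_cont.continuousOn
    · exact hb_cont.continuousOn.mul (hdcont.rpow_const (fun v hv => Or.inr (by linarith)))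
    · exact hc_cont.continuousOn.mul (hdcont.rpow_const (fun v hv => Or.inr (by linarith)))
  obtain ⟨M0, hM0⟩ := hKcomp.exists_bound_of_continuousOn
    (hFcont.mono Set.inter_subset_right)
  set M := max M0 1 with hMdef
  have hM1 : (1:ℝ) ≤ M := le_max_right _ _
  have hMpos : (0:ℝ) < M := lt_of_lt_of_le one_pos hM1
  have hcoef : ∀ k, (L^2 + a (x k)) ≤ M ∧ b (x k) * d (x k) ^ (θ-2) ≤ M
      ∧ c (x k) * d (x k) ^ (β-2) ≤ M ∧ d (x k) ≤ M := by
    intro k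
    have h := hM0 (x k) (hballdom k)
    rw [Real.norm_eq_abs] at h
    have hF := le_trans (le_abs_self _) h
    have hM0M : M0 ≤ M := le_max_left _ _
    have na : (0:ℝ) ≤ L^2 + a (x k) := add_nonneg (sq_nonneg L) (ha_nn _)
    have nb : 0 ≤ b (x k) * d (x k) ^ (θ-2) :=
      mul_nonneg (hb_nn _) (Real.rpow_nonneg (hd_pos _).le _)
    have nc : 0 ≤ c (x k) * d (x k) ^ (β-2) :=
      mul_nonneg (hc_nn _) (Real.rpow_nonneg (hd_pos _).le _)
    have nd := (hd_pos (x k)).le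
    exact ⟨by linarith, by linarith, by linarith, by linarith⟩
  -- lower bound on the stepsizes
  set γs : ℝ := min 1 (Real.sqrt (αmin / (8*M))) with hγsdef
  have hγs_pos : 0 < γs := lt_min one_pos (Real.sqrt_pos.mpr (by positivity))
  have hγs_sq : γs^2 ≤ αmin / (8*M) := by
    have h1 : γs ≤ Real.sqrt (αmin/(8*M)) := min_le_right _ _
    have h2 := Real.sq_sqrt (show (0:ℝ) ≤ αmin/(8*M) by positivity)
    nlinarith [hγs_pos.le]
  have hγbar_lb : ∀ k, γs ≤ γbar k := by
    intro k
    by_contra hcon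
    push_neg at hcon
    have hgb := hγbar_pos k
    have hgb1 : γbar k ≤ 1 := le_trans hcon.le (min_le_left _ _)
    have e1 : γbar k ^ θ ≤ γbar k ^ 2 := by
      have h := Real.rpow_le_rpow_of_exponent_ge hgb hgb1 hθ
      rwa [Real.rpow_two] at h
    have e2 : γbar k ^ β ≤ γbar k ^ 2 := by
      have h := Real.rpow_le_rpow_of_exponent_ge hgb hgb1 hβ
      rwa [Real.rpow_two] at h
    obtain ⟨ca, cb, cc, -⟩ := hcoef k
    have na : (0:ℝ) ≤ L^2 + a (x k) := add_nonneg (sq_nonneg L) (ha_nn _)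
    have nb : 0 ≤ b (x k) * d (x k) ^ (θ-2) :=
      mul_nonneg (hb_nn _) (Real.rpow_nonneg (hd_pos _).le _)
    have nc : 0 ≤ c (x k) * d (x k) ^ (β-2) :=
      mul_nonneg (hc_nn _) (Real.rpow_nonneg (hd_pos _).le _)
    have hP := hγbar_eq k
    have hαk := (hα k).1
    have hsq : γbar k ^ 2 < γs ^ 2 := by nlinarith
    have t1 : b (x k) * d (x k) ^ (θ-2) * γbar k ^ θ ≤ M * γbar k ^ 2 := by
      calc b (x k) * d (x k) ^ (θ-2) * γbar k ^ θ
          ≤ b (x k) * d (x k) ^ (θ-2) * γbar k ^ 2 := mul_le_mul_of_nonneg_left e1 nb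
        _ ≤ M * γbar k ^ 2 := mul_le_mul_of_nonneg_right cb (sq_nonneg _)
    have t2 : c (x k) * d (x k) ^ (β-2) * γbar k ^ β ≤ M * γbar k ^ 2 := by
      calc c (x k) * d (x k) ^ (β-2) * γbar k ^ β
          ≤ c (x k) * d (x k) ^ (β-2) * γbar k ^ 2 := mul_le_mul_of_nonneg_left e2 nc
        _ ≤ M * γbar k ^ 2 := mul_le_mul_of_nonneg_right cc (sq_nonneg _)
    have t3 : (L^2 + a (x k)) * γbar k ^ 2 ≤ M * γbar k ^ 2 :=
      mul_le_mul_of_nonneg_right ca (sq_nonneg _)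
    have hMg : M * γs ^ 2 ≤ αmin / 8 := by
      have := mul_le_mul_of_nonneg_left hγs_sq hMpos.le
      calc M * γs^2 ≤ M * (αmin / (8*M)) := this
        _ = αmin / 8 := by field_simp
    nlinarith
  have hγlb : ∀ k, min σ γs ≤ γ k := by
    intro k
    by_cases h : σ ≤ γbar k
    · exact le_trans (min_le_left _ _) (hγ_le k h).1
    · push_neg at h
      rw [hγ_eq k h]
      exact le_trans (min_le_right _ _) (hγbar_lb k)
  -- ‖x k - p k‖ → 0
  have hD2anti : Antitone (fun k => ‖x k - zb0‖^2) := fun j l h =>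
    pow_le_pow_left₀ (norm_nonneg _) (hantitone zb0 hzb0 j l h) 2
  have hD2bdd : BddBelow (Set.range fun k => ‖x k - zb0‖^2) :=
    ⟨0, by rintro r ⟨k, rfl⟩; positivity⟩
  have hD2conv := tendsto_atTop_ciInf hD2anti hD2bdd
  have hD2conv' : Tendsto (fun k => ‖x (k+1) - zb0‖^2) atTop
      (𝓝 (⨅ k, ‖x k - zb0‖^2)) := hD2conv.comp (tendsto_add_atTop_nat 1)
  have hdiff : Tendsto (fun k => ‖x k - zb0‖^2 - ‖x (k+1) - zb0‖^2) atTop (𝓝 0) := by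
    have h := hD2conv.sub hD2conv'
    simpa using h
  have htp2 : Tendsto (fun k => ‖x k - p k‖^2) atTop (𝓝 0) := by
    apply squeeze_zero (fun k => sq_nonneg _)
      (g := fun k => (1 - αmax)⁻¹ * (‖x k - zb0‖^2 - ‖x (k+1) - zb0‖^2))
    · intro k
      have hk := key zb0 hzb0 k
      have h1 : (1 - αmax) * ‖x k - p k‖^2 ≤ (1 - α k) * ‖x k - p k‖^2 :=
        mul_le_mul_of_nonneg_right (by linarith [(hα k).2]) (sq_nonneg _)
      have hpos : (0:ℝ) < 1 - αmax := by linarith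
      have h2 : (1 - αmax) * ‖x k - p k‖^2 ≤ ‖x k - zb0‖^2 - ‖x (k+1) - zb0‖^2 := by
        linarith
      calc ‖x k - p k‖^2 = (1 - αmax)⁻¹ * ((1 - αmax) * ‖x k - p k‖^2) := by
            field_simp
        _ ≤ (1 - αmax)⁻¹ * (‖x k - zb0‖^2 - ‖x (k+1) - zb0‖^2) :=
            mul_le_mul_of_nonneg_left h2 (inv_nonneg.mpr hpos.le)
    · have h := hdiff.const_mul ((1 - αmax)⁻¹)
      simpa using h
  have htp : Tendsto (fun k => ‖x k - p k‖) atTop (𝓝 0) := by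
    have h2 : Tendsto (fun k => Real.sqrt (‖x k - p k‖^2)) atTop (𝓝 (Real.sqrt 0)) :=
      (Real.continuous_sqrt.tendsto 0).comp htp2
    have heq : (fun k => Real.sqrt (‖x k - p k‖^2)) = fun k => ‖x k - p k‖ :=
      funext fun k => Real.sqrt_sq (norm_nonneg _)
    rwa [heq, Real.sqrt_zero] at h2
  -- ‖u k‖ ≤ (2 / min σ γs) * ‖x k - p k‖ and u → 0
  have hmin_pos : 0 < min σ γs := lt_min hσ hγs_pos
  have hubd : ∀ k, ‖u k‖ ≤ (2 / min σ γs) * ‖x k - p k‖ := by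
    intro k
    have hg := (hγpos k).1
    have hγw : γ k * ‖A (x k) + B (x k) - (A (p k) + B (p k))‖ ≤ ‖x k - p k‖ := by
      have h := hwb k
      have h2 : (γ k * ‖A (x k) + B (x k) - (A (p k) + B (p k))‖)^2 ≤ ‖x k - p k‖^2 := by
        rw [mul_pow]
        nlinarith [sq_nonneg ‖x k - p k‖, (hα k).2, hαmax]
      exact sq_le_of_sq (norm_nonneg _) h2 (mul_nonneg hg.le (norm_nonneg _))
    have hnu : γ k * ‖u k‖ ≤ 2 * ‖x k - p k‖ := by
      have h1 : ‖γ k • u k‖ ≤ ‖x k - p k‖ + ‖γ k • (A (x k) + B (x k) - (A (p k) + B (p k)))‖ := by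
        rw [hgu k]
        exact norm_sub_le _ _
      rw [norm_smul, norm_smul, Real.norm_eq_abs, abs_of_pos hg] at h1
      linarith
    rw [show (2 / min σ γs) * ‖x k - p k‖ = 2 * ‖x k - p k‖ / min σ γs by ring,
      le_div_iff₀ hmin_pos]
    have h3 : min σ γs * ‖u k‖ ≤ γ k * ‖u k‖ :=
      mul_le_mul_of_nonneg_right (hγlb k) (norm_nonneg _)
    linarith
  have hu0 : Tendsto u atTop (𝓝 0) := by
    apply squeeze_zero_norm hubd
    have h := htp.const_mul (2 / min σ γs)
    simpa using h
  -- limit point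
  have hbddK : Bornology.IsBounded (Metric.closedBall zb0 ‖x 0 - zb0‖ ∩ domC) :=
    Metric.isBounded_closedBall.subset Set.inter_subset_left
  obtain ⟨xs, hxsK, φ, hφ, hxφ⟩ := tendsto_subseq_of_bounded hbddK hballdom
  have hxsdom : xs ∈ domC := by
    rw [hKcomp.isClosed.closure_eq] at hxsK
    exact hxsK.2
  have hφtop : Tendsto φ atTop atTop := hφ.tendsto_atTop
  have hvec : Tendsto (fun k => x k - p k) atTop (𝓝 0) :=
    tendsto_zero_iff_norm_tendsto_zero.mpr htp
  have hpφ : Tendsto (fun j => p (φ j)) atTop (𝓝 xs) := by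
    have h := hxφ.sub (hvec.comp hφtop)
    simpa [Function.comp] using h
  have hpφw : Tendsto (fun j => p (φ j)) atTop (𝓝[domC] xs) :=
    tendsto_nhdsWithin_iff.mpr ⟨hpφ, Eventually.of_forall fun j => hpdom (φ j)⟩
  have hApφ : Tendsto (fun j => A (p (φ j))) atTop (𝓝 (A xs)) :=
    (hAcont xs hxsdom).tendsto.comp hpφw
  have hBpφ : Tendsto (fun j => B (p (φ j))) atTop (𝓝 (B xs)) :=
    (hBcont xs hxsdom).tendsto.comp hpφw
  have hck : ∀ k, (γ k)⁻¹ • (z k - p k) = u k - A (p k) - B (p k) := by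
    intro k; rw [hu k]; abel
  have hcφ : Tendsto (fun j => (γ (φ j))⁻¹ • (z (φ j) - p (φ j))) atTop
      (𝓝 (-(A xs + B xs))) := by
    have huφ : Tendsto (fun j => u (φ j)) atTop (𝓝 0) := hu0.comp hφtop
    have h := (huφ.sub hApφ).sub hBpφ
    have heq : (fun j => u (φ j) - A (p (φ j)) - B (p (φ j)))
        = fun j => (γ (φ j))⁻¹ • (z (φ j) - p (φ j)) := funext fun j => (hck (φ j)).symm
    rw [heq] at h
    have hz0 : (0:H) - A xs - B xs = -(A xs + B xs) := by abel
    rwa [hz0] at h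
  have hcsC : -(A xs + B xs) ∈ C xs := by
    apply hCmax
    intro y v hv
    have hj : ∀ j, 0 ≤ ⟪(γ (φ j))⁻¹ • (z (φ j) - p (φ j)) - v, p (φ j) - y⟫ :=
      fun j => hCmono (p (φ j)) y _ (hCp (φ j)) v hv
    have hlim : Tendsto (fun j => ⟪(γ (φ j))⁻¹ • (z (φ j) - p (φ j)) - v, p (φ j) - y⟫)
        atTop (𝓝 ⟪-(A xs + B xs) - v, xs - y⟫) :=
      Tendsto.inner (hcφ.sub tendsto_const_nhds) (hpφ.sub tendsto_const_nhds)
    exact ge_of_tendsto' hlim hj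
  have hxszer : ∃ c0 ∈ C xs, A xs + B xs + c0 = 0 := ⟨-(A xs + B xs), hcsC, by abel⟩
  have hxconv : Tendsto x atTop (𝓝 xs) := by
    rw [tendsto_iff_norm_sub_tendsto_zero]
    have hanti2 : ∀ j l, j ≤ l → ‖x l - xs‖ ≤ ‖x j - xs‖ := hantitone xs hxszer
    have hsub : Tendsto (fun j => ‖x (φ j) - xs‖) atTop (𝓝 0) :=
      tendsto_iff_norm_sub_tendsto_zero.mp hxφ
    rw [Metric.tendsto_atTop]
    intro ε hε
    obtain ⟨N, hN⟩ := (Metric.tendsto_atTop.mp hsub) ε hε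
    refine ⟨φ N, fun k hk => ?_⟩
    have h1 : ‖x k - xs‖ ≤ ‖x (φ N) - xs‖ := hanti2 (φ N) k hk
    have h2 := hN N (le_refl N)
    rw [Real.dist_eq, sub_zero, abs_of_nonneg (norm_nonneg _)] at h2 ⊢
    linarith
  have hpconv : Tendsto p atTop (𝓝 xs) := by
    have h := hxconv.sub hvec
    simpa using h
  exact ⟨xs, hxszer, hxconv, hpconv, hu0⟩
end

section
/- Suppose zer(A+B+C) ≠ ∅ and let z̄ ∈ zer(A+B+C). Then for the sequences generated by the AFBF algorithm with Stepsize Choice 1, for every k₀ ∈ ℕ and every integer k ≥ 1: min_{k₀ ≤ j ≤ k₀+k−1} ‖x_j − x̂_j‖ ≤ (1 + √α_max) · min_{k₀ ≤ j ≤ k₀+k−1} ‖x_j − p_j‖ ≤ (1 + √α_max) · ‖x_{k₀} − z̄‖ / √((1 − α_max) · k). Moreover x_j − x̂_j = γ_j u_j for every j ∈ ℕ. -/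
open scoped RealInnerProductSpace Pointwise
open Filter Topology

-- projection onto convex set is nonexpansive toward set points
lemma afbf_proj_nonexp {H : Type*} [NormedAddCommGroup H] [InnerProductSpace ℝ H]
    {K : Set H} (hK : Convex ℝ K) (P w y : H) (hP : P ∈ K) (hy : y ∈ K)
    (hdist : ∀ y' ∈ K, ‖w - P‖ ≤ ‖w - y'‖) : ‖P - y‖ ≤ ‖w - y‖ := by
  have hs : ⟪w - P, y - P⟫ ≤ 0 := by
    set s := ⟪w - P, y - P⟫
    set cc := ‖y - P‖ ^ 2 with hcc
    have key : ∀ t : ℝ, 0 < t → t ≤ 1 → 2 * s ≤ t * cc := by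
      intro t ht0 ht1
      have hm : P + t • (y - P) ∈ K := by
        have := hK hP hy (by linarith : (0:ℝ) ≤ 1 - t) (le_of_lt ht0) (by ring)
        convert this using 1
        module
      have h1 := hdist _ hm
      have h2 : ‖w - (P + t • (y - P))‖ ^ 2
          = ‖w - P‖ ^ 2 - 2 * t * s + t ^ 2 * cc := by
        have : w - (P + t • (y - P)) = (w - P) - t • (y - P) := by abel
        rw [this, norm_sub_sq_real, real_inner_smul_right, norm_smul]
        simp [mul_pow, abs_of_pos ht0]
        ring
      have h3 : ‖w - P‖ ^ 2 ≤ ‖w - (P + t • (y - P))‖ ^ 2 := by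
        apply pow_le_pow_left₀ (norm_nonneg _) h1
      nlinarith [sq_nonneg t]
    by_contra hpos
    push_neg at hpos
    have hcnn : 0 ≤ cc := sq_nonneg _
    rcases eq_or_lt_of_le hcnn with hc0 | hc0
    · have := key 1 one_pos le_rfl
      rw [← hc0] at this; linarith
    · have htpos : 0 < min 1 (s / cc) := lt_min one_pos (div_pos hpos hc0)
      have := key _ htpos (min_le_left _ _)
      have h4 : min 1 (s / cc) * cc ≤ (s / cc) * cc :=
        mul_le_mul_of_nonneg_right (min_le_right _ _) hcnn
      rw [div_mul_cancel₀ _ (ne_of_gt hc0)] at h4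
      linarith
  have : ‖w - y‖ ^ 2 = ‖w - P‖ ^ 2 - 2 * ⟪w - P, y - P⟫ + ‖y - P‖ ^ 2 := by
    have : w - y = (w - P) - (y - P) := by abel
    rw [this, norm_sub_sq_real]
  have h5 : ‖y - P‖ ^ 2 ≤ ‖w - y‖ ^ 2 := by nlinarith [sq_nonneg (‖w - P‖)]
  rw [norm_sub_rev]
  exact (pow_le_pow_iff_left₀ (norm_nonneg _) (norm_nonneg _) two_ne_zero).mp h5


lemma afbf_inner_identity {H : Type*} [NormedAddCommGroup H] [InnerProductSpace ℝ H]
    (X Pv E : H) :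
    ‖X - Pv + E‖ ^ 2 = ‖X‖ ^ 2 - ‖Pv‖ ^ 2 + ‖E‖ ^ 2 - 2 * ⟪Pv - E, X - Pv⟫ := by
  have h1 : ∀ v w : H, ‖v + w‖ ^ 2 = ‖v‖ ^ 2 + 2 * ⟪v, w⟫ + ‖w‖ ^ 2 := fun v w =>
    norm_add_sq_real v w
  have h2 : ∀ v w : H, ‖v - w‖ ^ 2 = ‖v‖ ^ 2 - 2 * ⟪v, w⟫ + ‖w‖ ^ 2 := fun v w =>
    norm_sub_sq_real v w
  rw [h1, h2]
  simp only [inner_sub_left, inner_sub_right]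
  rw [real_inner_comm X Pv, real_inner_comm X E, real_inner_comm Pv E]
  ring_nf
  rw [real_inner_self_eq_norm_sq]
  ring

lemma afbf_rpow_bound {r s θ : ℝ} (hr : 0 ≤ r) (hrs : r ≤ s) (hθ : 2 ≤ θ) :
    r ^ θ ≤ r ^ 2 * s ^ (θ - 2) := by
  rcases eq_or_lt_of_le hr with h0 | h0
  · rw [← h0, Real.zero_rpow (by linarith)]
    norm_num
  · have hs : 0 < s := lt_of_lt_of_le h0 hrs
    have : r ^ θ = r ^ (2:ℝ) * r ^ (θ - 2) := by
      rw [← Real.rpow_add h0]; ring_nf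
    rw [this, Real.rpow_two]
    exact mul_le_mul_of_nonneg_left (Real.rpow_le_rpow hr hrs (by linarith)) (sq_nonneg r)



open scoped RealInnerProductSpace Pointwise
open Filter Topology

set_option maxHeartbeats 2000000 in
theorem afbf_sublinear_rate
    {H : Type*} [NormedAddCommGroup H] [InnerProductSpace ℝ H] [FiniteDimensional ℝ H]
    (A B : H → H) (C : H → Set H)
    (domC : Set H) (hdomC : domC = {x : H | (C x).Nonempty})
    (hdom_ne : domC.Nonempty) (hdom_closed : IsClosed domC) (hdom_conv : Convex ℝ domC)
    -- C is maximally monotone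
    (hCmono : ∀ x y : H, ∀ u ∈ C x, ∀ v ∈ C y, 0 ≤ ⟪u - v, x - y⟫)
    (hCmax : ∀ x u : H, (∀ y : H, ∀ v ∈ C y, 0 ≤ ⟪u - v, x - y⟫) → u ∈ C x)
    -- A is continuous on dom C
    (hAcont : ContinuousOn A domC)
    -- B is L-Lipschitz on dom C
    (L : ℝ) (hL : 0 < L)
    (hB : ∀ x ∈ domC, ∀ y ∈ domC, ‖B x - B y‖ ≤ L * ‖x - y‖)
    -- A + B + C is pseudo-monotone
    (hpseudo : ∀ x y : H,
      (∃ cx ∈ C x, 0 ≤ ⟪A x + B x + cx, y - x⟫) →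
      ∀ cy ∈ C y, 0 ≤ ⟪A y + B y + cy, y - x⟫)
    -- metric projection onto dom C
    (projC : H → H)
    (hproj_mem : ∀ w : H, projC w ∈ domC)
    (hproj_dist : ∀ w : H, ∀ y ∈ domC, ‖w - projC w‖ ≤ ‖w - y‖)
    -- resolvent of γ C : single-valued, defined on all of H
    (J : ℝ → H → H)
    (hJ : ∀ γ : ℝ, 0 < γ → ∀ zz pz : H, J γ zz = pz ↔ zz - pz ∈ γ • C pz)
    -- Assumption 1(v)
    (ζ τ : ℝ) (hζ : 0 < ζ) (hτ : 0 < τ)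
    (hres : ∀ (uu w : H) (γ : ℝ), 0 < γ →
      ‖projC w - J γ (projC w - γ • uu)‖ ≤ γ * (ζ * ‖uu‖ + τ))
    -- generalized Lipschitz condition on A with μ = 2
    (θ β : ℝ) (hθ : 2 ≤ θ) (hβ : 2 ≤ β)
    (a b c : H → ℝ)
    (ha_cont : Continuous a) (hb_cont : Continuous b) (hc_cont : Continuous c)
    (ha_nn : ∀ v : H, 0 ≤ a v) (hb_nn : ∀ v : H, 0 ≤ b v) (hc_nn : ∀ v : H, 0 ≤ c v)
    (hA : ∀ z₁ ∈ domC, ∀ z₂ ∈ domC,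
      ‖A z₁ - A z₂‖ ^ 2 ≤
        a z₁ * ‖z₁ - z₂‖ ^ 2 + b z₁ * ‖z₁ - z₂‖ ^ θ + c z₁ * ‖z₁ - z₂‖ ^ β)
    -- d(x) = ζ‖Ax + Bx‖ + τ
    (d : H → ℝ) (hd : ∀ v : H, d v = ζ * ‖A v + B v‖ + τ)
    -- Stepsize Choice 1
    (αmin αmax σ : ℝ) (hαmin : 0 < αmin) (hα_le : αmin ≤ αmax) (hαmax : αmax < 1)
    (hσ : 0 < σ)
    (α : ℕ → ℝ) (hα : ∀ k : ℕ, α k ∈ Set.Icc αmin αmax)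
    (x z p qq xhat u : ℕ → H) (γ γbar : ℕ → ℝ)
    (hγbar_pos : ∀ k : ℕ, 0 < γbar k)
    (hγbar_eq : ∀ k : ℕ,
      b (x k) * d (x k) ^ (θ - 2) * γbar k ^ θ
        + c (x k) * d (x k) ^ (β - 2) * γbar k ^ β
        + (L ^ 2 + a (x k)) * γbar k ^ 2 = α k / 2)
    (hγ_le : ∀ k : ℕ, σ ≤ γbar k → σ ≤ γ k ∧ γ k ≤ γbar k)
    (hγ_eq : ∀ k : ℕ, γbar k < σ → γ k = γbar k)
    -- AFBF iterations
    (hx0 : x 0 ∈ domC)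
    (hz : ∀ k : ℕ, z k = x k - γ k • (A (x k) + B (x k)))
    (hp : ∀ k : ℕ, p k = J (γ k) (z k))
    (hq : ∀ k : ℕ, qq k = p k - γ k • (A (p k) + B (p k)))
    (hxhat : ∀ k : ℕ, xhat k = qq k - z k + x k)
    (hx_succ : ∀ k : ℕ, x (k + 1) = projC (xhat k))
    (hu : ∀ k : ℕ, u k = (γ k)⁻¹ • (z k - p k) + A (p k) + B (p k))
    -- zer(A+B+C) ≠ ∅ and z̄ ∈ zer(A+B+C)
    (hzer : ∃ zb : H, ∃ c0 ∈ C zb, A zb + B zb + c0 = 0)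
    (zbar : H) (hzbar : ∃ c0 ∈ C zbar, A zbar + B zbar + c0 = 0)
    (k₀ kk : ℕ) (hkk : 1 ≤ kk) :
    ((Finset.Icc k₀ (k₀ + kk - 1)).inf'
          (Finset.nonempty_Icc.mpr (by omega)) (fun j => ‖x j - xhat j‖)
        ≤ (1 + Real.sqrt αmax) *
            (Finset.Icc k₀ (k₀ + kk - 1)).inf'
              (Finset.nonempty_Icc.mpr (by omega)) (fun j => ‖x j - p j‖) ∧
      (1 + Real.sqrt αmax) *
          (Finset.Icc k₀ (k₀ + kk - 1)).inf'
            (Finset.nonempty_Icc.mpr (by omega)) (fun j => ‖x j - p j‖)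
        ≤ (1 + Real.sqrt αmax) * ‖x k₀ - zbar‖ / Real.sqrt ((1 - αmax) * (kk : ℝ))) ∧
    ∀ j : ℕ, x j - xhat j = γ j • u j := by
  -- basic positivity / domain facts
  have hγ' : ∀ k : ℕ, 0 < γ k ∧ γ k ≤ γbar k := by
    intro k
    rcases le_or_gt σ (γbar k) with h | h
    · obtain ⟨h1, h2⟩ := hγ_le k h
      exact ⟨lt_of_lt_of_le hσ h1, h2⟩
    · rw [hγ_eq k h]; exact ⟨hγbar_pos k, le_rfl⟩
  have hproj_fix : ∀ w ∈ domC, projC w = w := by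
    intro w hw
    have h0 : ‖w - projC w‖ ≤ 0 := by simpa using hproj_dist w w hw
    have h1 := sub_eq_zero.mp (norm_le_zero_iff.mp h0)
    exact h1.symm
  have hxdom : ∀ k : ℕ, x k ∈ domC := by
    intro k
    cases k with
    | zero => exact hx0
    | succ n => rw [hx_succ n]; exact hproj_mem _
  have hzdom : zbar ∈ domC := by
    obtain ⟨c0, hc0, _⟩ := hzbar
    rw [hdomC]; exact ⟨c0, hc0⟩
  have hCp : ∀ k : ℕ, (γ k)⁻¹ • (z k - p k) ∈ C (p k) := by
    intro k
    have hg := (hγ' k).1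
    have hmem := (hJ (γ k) hg (z k) (p k)).mp (hp k).symm
    rw [Set.mem_smul_set] at hmem
    obtain ⟨v, hv, hveq⟩ := hmem
    have : (γ k)⁻¹ • (z k - p k) = v := by
      rw [← hveq, smul_smul, inv_mul_cancel₀ hg.ne', one_smul]
    rwa [this]
  have hpdom : ∀ k : ℕ, p k ∈ domC := fun k => by rw [hdomC]; exact ⟨_, hCp k⟩
  have hdpos : ∀ v : H, 0 < d v := fun v => by rw [hd]; positivity
  have hrb : ∀ k : ℕ, ‖x k - p k‖ ≤ γ k * d (x k) := by
    intro k
    have hg := (hγ' k).1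
    have hres' := hres (A (x k) + B (x k)) (x k) (γ k) hg
    rw [hproj_fix _ (hxdom k), ← hz k, ← hp k, ← hd] at hres'
    exact hres'
  have hu_pos : ∀ k : ℕ, 0 ≤ ⟪u k, p k - zbar⟫ := by
    intro k
    obtain ⟨c0, hc0, hc0eq⟩ := hzbar
    have hstart : ∃ cx ∈ C zbar, 0 ≤ ⟪A zbar + B zbar + cx, p k - zbar⟫ :=
      ⟨c0, hc0, by rw [hc0eq]; simp⟩
    have hps := hpseudo zbar (p k) hstart _ (hCp k)
    have heq : u k = A (p k) + B (p k) + (γ k)⁻¹ • (z k - p k) := by rw [hu k]; abel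
    rw [heq]; exact hps
  have hxx : ∀ k : ℕ, x k - xhat k = γ k • u k := by
    intro k
    have hg := (hγ' k).1.ne'
    rw [hxhat k, hq k, hu k]
    simp only [smul_add]
    rw [smul_inv_smul₀ hg]
    abel
  have hxxE : ∀ k : ℕ, x k - xhat k
      = (x k - p k) - γ k • ((A (x k) + B (x k)) - (A (p k) + B (p k))) := by
    intro k
    rw [hxhat k, hq k, hz k]
    simp only [smul_sub, smul_add]
    abel
  have hαmax0 : (0:ℝ) ≤ αmax := (lt_of_lt_of_le hαmin hα_le).le
  -- key stepsize bound
  have hE2 : ∀ k : ℕ, ‖γ k • ((A (x k) + B (x k)) - (A (p k) + B (p k)))‖ ^ 2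
      ≤ α k * ‖x k - p k‖ ^ 2 := by
    intro k
    obtain ⟨hg, hgle⟩ := hγ' k
    have hr0 : (0:ℝ) ≤ ‖x k - p k‖ := norm_nonneg _
    have hdp := hdpos (x k)
    have hs0 : 0 < γ k * d (x k) := mul_pos hg hdp
    have hrs := hrb k
    have h2 : ‖x k - p k‖ ^ θ ≤ ‖x k - p k‖ ^ 2 * (γ k * d (x k)) ^ (θ - 2) :=
      afbf_rpow_bound hr0 hrs hθ
    have h3 : ‖x k - p k‖ ^ β ≤ ‖x k - p k‖ ^ 2 * (γ k * d (x k)) ^ (β - 2) :=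
      afbf_rpow_bound hr0 hrs hβ
    have hAb : ‖A (x k) - A (p k)‖ ^ 2
        ≤ (a (x k) + b (x k) * (γ k * d (x k)) ^ (θ - 2)
            + c (x k) * (γ k * d (x k)) ^ (β - 2)) * ‖x k - p k‖ ^ 2 := by
      have h1 := hA (x k) (hxdom k) (p k) (hpdom k)
      nlinarith [hb_nn (x k), hc_nn (x k)]
    have hBb : ‖B (x k) - B (p k)‖ ^ 2 ≤ L ^ 2 * ‖x k - p k‖ ^ 2 := by
      have h1 := hB (x k) (hxdom k) (p k) (hpdom k)
      nlinarith [norm_nonneg (B (x k) - B (p k)), hL.le]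
    have hFb : ‖(A (x k) + B (x k)) - (A (p k) + B (p k))‖ ^ 2
        ≤ 2 * ‖A (x k) - A (p k)‖ ^ 2 + 2 * ‖B (x k) - B (p k)‖ ^ 2 := by
      have htri : ‖(A (x k) + B (x k)) - (A (p k) + B (p k))‖
          ≤ ‖A (x k) - A (p k)‖ + ‖B (x k) - B (p k)‖ := by
        have heq : (A (x k) + B (x k)) - (A (p k) + B (p k))
            = (A (x k) - A (p k)) + (B (x k) - B (p k)) := by abel
        rw [heq]; exact norm_add_le _ _
      nlinarith [norm_nonneg ((A (x k) + B (x k)) - (A (p k) + B (p k))),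
        norm_nonneg (A (x k) - A (p k)), norm_nonneg (B (x k) - B (p k)),
        sq_nonneg (‖A (x k) - A (p k)‖ - ‖B (x k) - B (p k)‖)]
    -- rewrite the mixed powers
    have hmixθ : γ k ^ 2 * (γ k * d (x k)) ^ (θ - 2) = γ k ^ θ * d (x k) ^ (θ - 2) := by
      rw [Real.mul_rpow hg.le hdp.le]
      have hγθ : γ k ^ (2:ℕ) * γ k ^ (θ - 2) = γ k ^ θ := by
        rw [← Real.rpow_natCast (γ k) 2, ← Real.rpow_add hg]
        congr 1; push_cast; ring
      calc γ k ^ 2 * (γ k ^ (θ - 2) * d (x k) ^ (θ - 2))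
          = γ k ^ (2:ℕ) * γ k ^ (θ - 2) * d (x k) ^ (θ - 2) := by ring
        _ = γ k ^ θ * d (x k) ^ (θ - 2) := by rw [hγθ]
    have hmixβ : γ k ^ 2 * (γ k * d (x k)) ^ (β - 2) = γ k ^ β * d (x k) ^ (β - 2) := by
      rw [Real.mul_rpow hg.le hdp.le]
      have hγβ : γ k ^ (2:ℕ) * γ k ^ (β - 2) = γ k ^ β := by
        rw [← Real.rpow_natCast (γ k) 2, ← Real.rpow_add hg]
        congr 1; push_cast; ring
      calc γ k ^ 2 * (γ k ^ (β - 2) * d (x k) ^ (β - 2))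
          = γ k ^ (2:ℕ) * γ k ^ (β - 2) * d (x k) ^ (β - 2) := by ring
        _ = γ k ^ β * d (x k) ^ (β - 2) := by rw [hγβ]
    have hmono : b (x k) * d (x k) ^ (θ - 2) * γ k ^ θ
        + c (x k) * d (x k) ^ (β - 2) * γ k ^ β
        + (L ^ 2 + a (x k)) * γ k ^ 2 ≤ α k / 2 := by
      rw [← hγbar_eq k]
      have m1 : γ k ^ θ ≤ γbar k ^ θ := Real.rpow_le_rpow hg.le hgle (by linarith)
      have m2 : γ k ^ β ≤ γbar k ^ β := Real.rpow_le_rpow hg.le hgle (by linarith)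
      have m3 : γ k ^ 2 ≤ γbar k ^ 2 := by exact pow_le_pow_left₀ hg.le hgle 2
      have n1 : 0 ≤ b (x k) * d (x k) ^ (θ - 2) :=
        mul_nonneg (hb_nn _) (Real.rpow_nonneg hdp.le _)
      have n2 : 0 ≤ c (x k) * d (x k) ^ (β - 2) :=
        mul_nonneg (hc_nn _) (Real.rpow_nonneg hdp.le _)
      have n3 : 0 ≤ L ^ 2 + a (x k) := by have := ha_nn (x k); positivity
      have := mul_le_mul_of_nonneg_left m1 n1
      have := mul_le_mul_of_nonneg_left m2 n2
      have := mul_le_mul_of_nonneg_left m3 n3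
      linarith
    have hcoef : γ k ^ 2 * (2 * (L ^ 2 + a (x k))
        + 2 * (b (x k) * (γ k * d (x k)) ^ (θ - 2))
        + 2 * (c (x k) * (γ k * d (x k)) ^ (β - 2))) ≤ α k := by
      have expand : γ k ^ 2 * (2 * (L ^ 2 + a (x k))
          + 2 * (b (x k) * (γ k * d (x k)) ^ (θ - 2))
          + 2 * (c (x k) * (γ k * d (x k)) ^ (β - 2)))
          = 2 * (b (x k) * d (x k) ^ (θ - 2) * γ k ^ θ
            + c (x k) * d (x k) ^ (β - 2) * γ k ^ β
            + (L ^ 2 + a (x k)) * γ k ^ 2) := by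
        rw [show γ k ^ 2 * (2 * (L ^ 2 + a (x k))
          + 2 * (b (x k) * (γ k * d (x k)) ^ (θ - 2))
          + 2 * (c (x k) * (γ k * d (x k)) ^ (β - 2)))
          = 2 * ((L ^ 2 + a (x k)) * γ k ^ 2)
            + 2 * (b (x k) * (γ k ^ 2 * (γ k * d (x k)) ^ (θ - 2)))
            + 2 * (c (x k) * (γ k ^ 2 * (γ k * d (x k)) ^ (β - 2))) from by ring,
          hmixθ, hmixβ]
        ring
      rw [expand]
      linarith
    rw [norm_smul, Real.norm_eq_abs, abs_of_pos hg, mul_pow]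
    calc γ k ^ 2 * ‖(A (x k) + B (x k)) - (A (p k) + B (p k))‖ ^ 2
        ≤ γ k ^ 2 * (2 * ‖A (x k) - A (p k)‖ ^ 2 + 2 * ‖B (x k) - B (p k)‖ ^ 2) :=
          mul_le_mul_of_nonneg_left hFb (sq_nonneg _)
      _ ≤ γ k ^ 2 * ((2 * (L ^ 2 + a (x k))
          + 2 * (b (x k) * (γ k * d (x k)) ^ (θ - 2))
          + 2 * (c (x k) * (γ k * d (x k)) ^ (β - 2))) * ‖x k - p k‖ ^ 2) := by
          apply mul_le_mul_of_nonneg_left _ (sq_nonneg _)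
          nlinarith
      _ = (γ k ^ 2 * (2 * (L ^ 2 + a (x k))
          + 2 * (b (x k) * (γ k * d (x k)) ^ (θ - 2))
          + 2 * (c (x k) * (γ k * d (x k)) ^ (β - 2)))) * ‖x k - p k‖ ^ 2 := by ring
      _ ≤ α k * ‖x k - p k‖ ^ 2 := mul_le_mul_of_nonneg_right hcoef (sq_nonneg _)
  -- Fejér inequality
  have hfejer : ∀ k : ℕ, ‖x (k+1) - zbar‖ ^ 2
      ≤ ‖x k - zbar‖ ^ 2 - (1 - αmax) * ‖x k - p k‖ ^ 2 := by
    intro k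
    set E := γ k • ((A (x k) + B (x k)) - (A (p k) + B (p k))) with hEdef
    have hhat : xhat k - zbar = (x k - zbar) - (x k - p k) + E := by
      have h := hxxE k
      have h2 : xhat k = x k - ((x k - p k) - E) := by rw [← h]; abel
      rw [h2]; abel
    have hinner : ⟪(x k - p k) - E, (x k - zbar) - (x k - p k)⟫
        = γ k * ⟪u k, p k - zbar⟫ := by
      have h1 : (x k - p k) - E = γ k • u k := by rw [← hxxE k, hxx k]
      have h2 : (x k - zbar) - (x k - p k) = p k - zbar := by abel
      rw [h1, h2, real_inner_smul_left]
    have hxe : ‖xhat k - zbar‖ ^ 2 = ‖x k - zbar‖ ^ 2 - ‖x k - p k‖ ^ 2 + ‖E‖ ^ 2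
        - 2 * (γ k * ⟪u k, p k - zbar⟫) := by
      rw [hhat, afbf_inner_identity, hinner]
    have hproj' := afbf_proj_nonexp hdom_conv (projC (xhat k)) (xhat k) zbar
      (hproj_mem _) hzdom (hproj_dist (xhat k))
    have hstep : ‖projC (xhat k) - zbar‖ ^ 2 ≤ ‖xhat k - zbar‖ ^ 2 :=
      pow_le_pow_left₀ (norm_nonneg _) hproj' 2
    have hE2' := hE2 k
    have hαk : α k * ‖x k - p k‖ ^ 2 ≤ αmax * ‖x k - p k‖ ^ 2 :=
      mul_le_mul_of_nonneg_right (hα k).2 (sq_nonneg _)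
    have hupos := mul_nonneg (hγ' k).1.le (hu_pos k)
    rw [hx_succ k]
    linarith
  -- telescoping sum
  have hsum : ∀ n : ℕ, ∑ j ∈ Finset.Ico k₀ (k₀ + n), (1 - αmax) * ‖x j - p j‖ ^ 2
      ≤ ‖x k₀ - zbar‖ ^ 2 - ‖x (k₀ + n) - zbar‖ ^ 2 := by
    intro n
    induction n with
    | zero => simp
    | succ n ih =>
      rw [show k₀ + (n+1) = (k₀ + n) + 1 from rfl,
        Finset.sum_Ico_succ_top (Nat.le_add_right _ _)]
      have := hfejer (k₀ + n)
      linarith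
  -- min over window
  have hTne : (Finset.Icc k₀ (k₀ + kk - 1)).Nonempty := Finset.nonempty_Icc.mpr (by omega)
  set m := (Finset.Icc k₀ (k₀ + kk - 1)).inf' hTne (fun j => ‖x j - p j‖) with hmdef
  obtain ⟨j0, hj0T, hj0⟩ := Finset.exists_mem_eq_inf' hTne (fun j => ‖x j - p j‖)
  have hm0 : 0 ≤ m := by rw [hmdef, hj0]; exact norm_nonneg _
  have hIcoT : Finset.Ico k₀ (k₀ + kk) = Finset.Icc k₀ (k₀ + kk - 1) := by
    ext j; simp only [Finset.mem_Ico, Finset.mem_Icc]; omega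
  have hcard : (Finset.Icc k₀ (k₀ + kk - 1)).card = kk := by
    rw [Nat.card_Icc]; omega
  have hlow : (kk : ℝ) * ((1 - αmax) * m ^ 2)
      ≤ ∑ j ∈ Finset.Ico k₀ (k₀ + kk), (1 - αmax) * ‖x j - p j‖ ^ 2 := by
    rw [hIcoT]
    have hle : ∀ j ∈ Finset.Icc k₀ (k₀ + kk - 1),
        (1 - αmax) * m ^ 2 ≤ (1 - αmax) * ‖x j - p j‖ ^ 2 := by
      intro j hj
      have h1 : m ≤ ‖x j - p j‖ := by rw [hmdef]; exact Finset.inf'_le _ hj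
      have h2 : m ^ 2 ≤ ‖x j - p j‖ ^ 2 := by nlinarith
      nlinarith
    have := Finset.card_nsmul_le_sum _ _ _ hle
    rwa [hcard, nsmul_eq_mul] at this
  have hkey : (1 - αmax) * (kk : ℝ) * m ^ 2 ≤ ‖x k₀ - zbar‖ ^ 2 := by
    have h1 := hsum kk
    have h2 : (0:ℝ) ≤ ‖x (k₀ + kk) - zbar‖ ^ 2 := sq_nonneg _
    nlinarith
  have hposS : (0:ℝ) < (1 - αmax) * (kk : ℝ) := by
    have : (1:ℝ) ≤ (kk : ℝ) := by exact_mod_cast hkk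
    nlinarith
  have hS : 0 < Real.sqrt ((1 - αmax) * (kk : ℝ)) := Real.sqrt_pos.mpr hposS
  have hmfin : m ≤ ‖x k₀ - zbar‖ / Real.sqrt ((1 - αmax) * (kk : ℝ)) := by
    rw [le_div_iff₀ hS]
    have h1 : (m * Real.sqrt ((1 - αmax) * (kk : ℝ))) ^ 2 ≤ ‖x k₀ - zbar‖ ^ 2 := by
      rw [mul_pow, Real.sq_sqrt hposS.le]
      nlinarith
    exact (pow_le_pow_iff_left₀ (by positivity) (norm_nonneg _) two_ne_zero).mp h1
  have hone : (0:ℝ) ≤ 1 + Real.sqrt αmax := by positivity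
  have hxhat_le : ∀ j : ℕ, ‖x j - xhat j‖ ≤ (1 + Real.sqrt αmax) * ‖x j - p j‖ := by
    intro j
    have hEn : ‖γ j • ((A (x j) + B (x j)) - (A (p j) + B (p j)))‖
        ≤ Real.sqrt αmax * ‖x j - p j‖ := by
      have h2 : ‖γ j • ((A (x j) + B (x j)) - (A (p j) + B (p j)))‖ ^ 2
          ≤ (Real.sqrt αmax * ‖x j - p j‖) ^ 2 := by
        rw [mul_pow, Real.sq_sqrt hαmax0]
        have := hE2 j
        have hαk : α j * ‖x j - p j‖ ^ 2 ≤ αmax * ‖x j - p j‖ ^ 2 :=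
          mul_le_mul_of_nonneg_right (hα j).2 (sq_nonneg _)
        linarith
      exact (pow_le_pow_iff_left₀ (norm_nonneg _) (by positivity) two_ne_zero).mp h2
    rw [hxxE j]
    calc ‖(x j - p j) - γ j • ((A (x j) + B (x j)) - (A (p j) + B (p j)))‖
        ≤ ‖x j - p j‖ + ‖γ j • ((A (x j) + B (x j)) - (A (p j) + B (p j)))‖ :=
          norm_sub_le _ _
      _ ≤ ‖x j - p j‖ + Real.sqrt αmax * ‖x j - p j‖ := by linarith
      _ = (1 + Real.sqrt αmax) * ‖x j - p j‖ := by ring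
  have hgoal1 : (Finset.Icc k₀ (k₀ + kk - 1)).inf' hTne (fun j => ‖x j - xhat j‖)
      ≤ (1 + Real.sqrt αmax) * m := by
    calc (Finset.Icc k₀ (k₀ + kk - 1)).inf' hTne (fun j => ‖x j - xhat j‖)
        ≤ ‖x j0 - xhat j0‖ := Finset.inf'_le _ hj0T
      _ ≤ (1 + Real.sqrt αmax) * ‖x j0 - p j0‖ := hxhat_le j0
      _ = (1 + Real.sqrt αmax) * m := by rw [← hj0]
  have hgoal2 : (1 + Real.sqrt αmax) * m
      ≤ (1 + Real.sqrt αmax) * ‖x k₀ - zbar‖ / Real.sqrt ((1 - αmax) * (kk : ℝ)) := by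
    rw [mul_div_assoc]
    exact mul_le_mul_of_nonneg_left hmfin hone
  exact ⟨⟨hgoal1, hgoal2⟩, fun j => hxx j⟩
end

section
/- Let x, p ∈ D, γ > 0, d > 0, ε > 0 and α ∈ (0, 1] be such that ‖x − p‖ ≤ γ·d, ‖x − p‖ > γ·ε/2, and L²γ² + b·d^{θ−2}·γ^θ + c·d^{β−2}·γ^β + 2^{2−μ}·a·γ^μ·ε^{μ−2} ≤ α/2. Then γ² ‖(A x + B x) − (A p + B p)‖² ≤ α ‖x − p‖². -/
set_option maxHeartbeats 1000000


theorem stepsize_implies_lipschitz_bound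
    {H : Type*} [NormedAddCommGroup H] [InnerProductSpace ℝ H]
    (D : Set H) (A B : H → H)
    (L : ℝ) (hL : 0 < L)
    (hB : ∀ z₁ ∈ D, ∀ z₂ ∈ D, ‖B z₁ - B z₂‖ ≤ L * ‖z₁ - z₂‖)
    (μ θ β a b c : ℝ)
    (hμ0 : 0 < μ) (hμ2 : μ < 2) (hθ : 2 ≤ θ) (hβ : 2 ≤ β)
    (ha : 0 ≤ a) (hb : 0 ≤ b) (hc : 0 ≤ c)
    (hA : ∀ z₁ ∈ D, ∀ z₂ ∈ D,
      ‖A z₁ - A z₂‖ ^ 2 ≤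
        a * ‖z₁ - z₂‖ ^ μ + b * ‖z₁ - z₂‖ ^ θ + c * ‖z₁ - z₂‖ ^ β)
    (x p : H) (hx : x ∈ D) (hp : p ∈ D)
    (γ d ε α : ℝ) (hγ : 0 < γ) (hd : 0 < d) (hε : 0 < ε) (hα0 : 0 < α) (hα1 : α ≤ 1)
    (hxp_le : ‖x - p‖ ≤ γ * d)
    (hxp_gt : γ * ε / 2 < ‖x - p‖)
    (hstep : L ^ 2 * γ ^ 2 + b * d ^ (θ - 2) * γ ^ θ + c * d ^ (β - 2) * γ ^ β
        + 2 ^ (2 - μ) * a * γ ^ μ * ε ^ (μ - 2) ≤ α / 2) :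
    γ ^ 2 * ‖(A x + B x) - (A p + B p)‖ ^ 2 ≤ α * ‖x - p‖ ^ 2 := by
  set n := ‖x - p‖ with hn_def
  have hn : 0 < n := lt_of_le_of_lt (by positivity) hxp_gt
  have hA' := hA x hx p hp
  have hB' := hB x hx p hp
  have hB2 : ‖B x - B p‖ ^ 2 ≤ L ^ 2 * n ^ 2 := by
    nlinarith [norm_nonneg (B x - B p), mul_pos hL hn]
  have hAB : ‖(A x + B x) - (A p + B p)‖ ^ 2 ≤ 2 * ‖A x - A p‖ ^ 2 + 2 * ‖B x - B p‖ ^ 2 := by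
    have heq : (A x + B x) - (A p + B p) = (A x - A p) + (B x - B p) := by abel
    rw [heq]
    have h := norm_add_le (A x - A p) (B x - B p)
    nlinarith [norm_nonneg (A x - A p), norm_nonneg (B x - B p),
      norm_nonneg ((A x - A p) + (B x - B p)), sq_nonneg (‖A x - A p‖ - ‖B x - B p‖)]
  have hr2 : ∀ y : ℝ, 0 ≤ y → y ^ (2:ℝ) = y ^ 2 := fun y hy => by
    rw [show (2:ℝ) = ((2:ℕ):ℝ) by norm_num, Real.rpow_natCast]
  have key : ∀ t : ℝ, 2 ≤ t → γ ^ 2 * n ^ t ≤ d ^ (t - 2) * γ ^ t * n ^ 2 := by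
    intro t ht
    have h1 : n ^ t = n ^ (t - 2) * n ^ (2:ℝ) := by
      rw [← Real.rpow_add hn]; ring_nf
    have h2 : n ^ (t - 2) ≤ (γ * d) ^ (t - 2) :=
      Real.rpow_le_rpow hn.le hxp_le (by linarith)
    have h3 : (γ * d) ^ (t - 2) = γ ^ (t - 2) * d ^ (t - 2) := Real.mul_rpow hγ.le hd.le
    have h4 : γ ^ (2:ℝ) * γ ^ (t - 2) = γ ^ t := by
      rw [← Real.rpow_add hγ]; ring_nf
    calc γ ^ 2 * n ^ t = γ ^ (2:ℝ) * (n ^ (t - 2) * n ^ (2:ℝ)) := by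
          rw [hr2 γ hγ.le, h1]
      _ ≤ γ ^ (2:ℝ) * ((γ * d) ^ (t - 2) * n ^ (2:ℝ)) := by
          have h5 : (0:ℝ) ≤ n ^ (2:ℝ) := Real.rpow_nonneg hn.le _
          have h6 : (0:ℝ) ≤ γ ^ (2:ℝ) := Real.rpow_nonneg hγ.le _
          exact mul_le_mul_of_nonneg_left (mul_le_mul_of_nonneg_right h2 h5) h6
      _ = d ^ (t - 2) * γ ^ t * n ^ 2 := by
          rw [h3, ← h4, hr2 n hn.le]; ring
  have hμ' : γ ^ 2 * n ^ μ ≤ 2 ^ (2 - μ) * γ ^ μ * ε ^ (μ - 2) * n ^ 2 := by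
    have h1 : n ^ μ = n ^ (μ - 2) * n ^ (2:ℝ) := by
      rw [← Real.rpow_add hn]; ring_nf
    have hγε : 0 < γ * ε / 2 := by positivity
    have h2 : n ^ (μ - 2) ≤ (γ * ε / 2) ^ (μ - 2) :=
      Real.rpow_le_rpow_of_nonpos hγε hxp_gt.le (by linarith)
    have h3 : (γ * ε / 2) ^ (μ - 2) = γ ^ (μ - 2) * ε ^ (μ - 2) * 2 ^ (2 - μ) := by
      have : γ * ε / 2 = γ * ε * (2:ℝ)⁻¹ := by ring
      rw [this, Real.mul_rpow (by positivity) (by positivity),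
        Real.mul_rpow hγ.le hε.le, Real.inv_rpow (by norm_num),
        ← Real.rpow_neg (by norm_num)]
      ring_nf
    have h4 : γ ^ (2:ℝ) * γ ^ (μ - 2) = γ ^ μ := by
      rw [← Real.rpow_add hγ]; ring_nf
    calc γ ^ 2 * n ^ μ = γ ^ (2:ℝ) * (n ^ (μ - 2) * n ^ (2:ℝ)) := by
          rw [hr2 γ hγ.le, h1]
      _ ≤ γ ^ (2:ℝ) * ((γ * ε / 2) ^ (μ - 2) * n ^ (2:ℝ)) := by
          have h5 : (0:ℝ) ≤ n ^ (2:ℝ) := Real.rpow_nonneg hn.le _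
          have h6 : (0:ℝ) ≤ γ ^ (2:ℝ) := Real.rpow_nonneg hγ.le _
          exact mul_le_mul_of_nonneg_left (mul_le_mul_of_nonneg_right h2 h5) h6
      _ = 2 ^ (2 - μ) * γ ^ μ * ε ^ (μ - 2) * n ^ 2 := by
          rw [h3, ← h4, hr2 n hn.le]; ring
  have hθ' := key θ hθ
  have hβ' := key β hβ
  have hn2 : (0:ℝ) ≤ n ^ 2 := by positivity
  have hγ2 : (0:ℝ) ≤ γ ^ 2 := by positivity
  have e1 := mul_le_mul_of_nonneg_left hAB hγ2
  have e2 := mul_le_mul_of_nonneg_left hA' hγ2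
  have e3 := mul_le_mul_of_nonneg_left hB2 hγ2
  have e4 := mul_le_mul_of_nonneg_left hμ' (by linarith : (0:ℝ) ≤ 2 * a)
  have e5 := mul_le_mul_of_nonneg_left hθ' (by linarith : (0:ℝ) ≤ 2 * b)
  have e6 := mul_le_mul_of_nonneg_left hβ' (by linarith : (0:ℝ) ≤ 2 * c)
  have e7 := mul_le_mul_of_nonneg_right hstep (by positivity : (0:ℝ) ≤ 2 * n ^ 2)
  linarith [e1, e2, e3, e4, e5, e6, e7]
end

section
/- Let x, p ∈ D, γ > 0, d > 0, ε > 0 and α ∈ (0, 1] be such that ‖x − p‖ ≤ γ·d, ‖x − p‖ ≤ γ·ε/2, and L²·d^{2−μ}·γ² + b·d^{θ−μ}·γ^θ + c·d^{β−μ}·γ^β + a·γ^μ ≤ ε^{2−μ}·α / 2^{3−μ}. Then ‖(A p + B p) − (A x + B x)‖ ≤ ε/2, and consequently ‖γ⁻¹(x − p) + (A p + B p) − (A x + B x)‖ ≤ ε. -/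
set_option maxHeartbeats 1600000 in
theorem stepsize_implies_small_residual
    {H : Type*} [NormedAddCommGroup H] [InnerProductSpace ℝ H]
    (D : Set H) (A B : H → H)
    (L : ℝ) (hL : 0 < L)
    (hB : ∀ z₁ ∈ D, ∀ z₂ ∈ D, ‖B z₁ - B z₂‖ ≤ L * ‖z₁ - z₂‖)
    (μ θ β a b c : ℝ)
    (hμ0 : 0 < μ) (hμ2 : μ < 2) (hθ : 2 ≤ θ) (hβ : 2 ≤ β)
    (ha : 0 ≤ a) (hb : 0 ≤ b) (hc : 0 ≤ c)
    (hA : ∀ z₁ ∈ D, ∀ z₂ ∈ D,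
      ‖A z₁ - A z₂‖ ^ 2 ≤
        a * ‖z₁ - z₂‖ ^ μ + b * ‖z₁ - z₂‖ ^ θ + c * ‖z₁ - z₂‖ ^ β)
    (x p : H) (hx : x ∈ D) (hp : p ∈ D)
    (γ d ε α : ℝ) (hγ : 0 < γ) (hd : 0 < d) (hε : 0 < ε) (hα0 : 0 < α) (hα1 : α ≤ 1)
    (hxp_le : ‖x - p‖ ≤ γ * d)
    (hxp_small : ‖x - p‖ ≤ γ * ε / 2)
    (hstep : L ^ 2 * d ^ (2 - μ) * γ ^ 2 + b * d ^ (θ - μ) * γ ^ θ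
        + c * d ^ (β - μ) * γ ^ β + a * γ ^ μ ≤ ε ^ (2 - μ) * α / 2 ^ (3 - μ)) :
    ‖(A p + B p) - (A x + B x)‖ ≤ ε / 2 ∧
    ‖γ⁻¹ • (x - p) + (A p + B p) - (A x + B x)‖ ≤ ε := by
  have key : ‖(A p + B p) - (A x + B x)‖ ≤ ε / 2 := by
    by_cases hxp : x = p
    · subst hxp
      simp
      positivity
    · set r := ‖x - p‖ with hrdef
      have hr0 : 0 < r := norm_pos_iff.mpr (sub_ne_zero.mpr hxp)
      have hεh : (0:ℝ) ≤ ε / 2 := by positivity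
      have hrε : r ^ μ ≤ γ ^ μ * (ε / 2) ^ μ := by
        rw [← Real.mul_rpow hγ.le hεh]
        exact Real.rpow_le_rpow hr0.le (by linarith) hμ0.le
      have hkey : ∀ e : ℝ, μ ≤ e → r ^ e ≤ γ ^ e * d ^ (e - μ) * (ε / 2) ^ μ := by
        intro e he
        have h1 : r ^ e = r ^ (e - μ) * r ^ μ := by
          rw [← Real.rpow_add hr0]; ring_nf
        have h2 : r ^ (e - μ) ≤ (γ * d) ^ (e - μ) :=
          Real.rpow_le_rpow hr0.le hxp_le (by linarith)
        calc r ^ e = r ^ (e - μ) * r ^ μ := h1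
          _ ≤ (γ * d) ^ (e - μ) * (γ ^ μ * (ε / 2) ^ μ) :=
              mul_le_mul h2 hrε (Real.rpow_nonneg hr0.le μ) (by positivity)
          _ = (γ ^ (e - μ) * γ ^ μ) * d ^ (e - μ) * (ε / 2) ^ μ := by
              rw [Real.mul_rpow hγ.le hd.le]; ring
          _ = γ ^ e * d ^ (e - μ) * (ε / 2) ^ μ := by
              rw [← Real.rpow_add hγ, sub_add_cancel]
      have hA2 : ‖A p - A x‖ ^ 2 ≤ a * r ^ μ + b * r ^ θ + c * r ^ β := by
        have := hA p hp x hx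
        simpa [norm_sub_rev, ← hrdef] using this
      have hB2 : ‖B p - B x‖ ≤ L * r := by
        have := hB p hp x hx
        simpa [norm_sub_rev, ← hrdef] using this
      -- convert nat powers to rpow for r^2 and γ^2
      have hr2 : r ^ (2:ℕ) = r ^ ((2:ℝ)) := (Real.rpow_natCast r 2).symm
      have hγ2 : γ ^ ((2:ℝ)) = γ ^ (2:ℕ) := by
        rw [← Real.rpow_natCast γ 2]; norm_num
      have hrμe : r ^ μ ≤ γ ^ μ * (ε / 2) ^ μ := hrε
      have hrθ : r ^ θ ≤ γ ^ θ * d ^ (θ - μ) * (ε / 2) ^ μ := hkey θ (by linarith)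
      have hrβ : r ^ β ≤ γ ^ β * d ^ (β - μ) * (ε / 2) ^ μ := hkey β (by linarith)
      have hr2e : r ^ (2:ℕ) ≤ γ ^ (2:ℕ) * d ^ (2 - μ) * (ε / 2) ^ μ := by
        rw [hr2, ← hγ2]
        exact hkey 2 (by linarith)
      have hεμ : (0:ℝ) ≤ (ε / 2) ^ μ := Real.rpow_nonneg hεh μ
      have hsum : ‖A p - A x‖ ^ 2 + (L * r) ^ 2 ≤
          (L ^ 2 * d ^ (2 - μ) * γ ^ 2 + b * d ^ (θ - μ) * γ ^ θ
            + c * d ^ (β - μ) * γ ^ β + a * γ ^ μ) * (ε / 2) ^ μ := by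
        have h1 : (L * r) ^ 2 = L ^ 2 * r ^ (2:ℕ) := by ring
        have h2 : L ^ 2 * r ^ (2:ℕ) ≤ L ^ 2 * (γ ^ (2:ℕ) * d ^ (2 - μ) * (ε / 2) ^ μ) := by
          apply mul_le_mul_of_nonneg_left hr2e (by positivity)
        have h3 : a * r ^ μ ≤ a * (γ ^ μ * (ε / 2) ^ μ) :=
          mul_le_mul_of_nonneg_left hrμe ha
        have h4 : b * r ^ θ ≤ b * (γ ^ θ * d ^ (θ - μ) * (ε / 2) ^ μ) :=
          mul_le_mul_of_nonneg_left hrθ hb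
        have h5 : c * r ^ β ≤ c * (γ ^ β * d ^ (β - μ) * (ε / 2) ^ μ) :=
          mul_le_mul_of_nonneg_left hrβ hc
        linarith [hA2, h1, h2, h3, h4, h5]
      -- compute the right-hand side bound
      have hrhs : (ε ^ (2 - μ) * α / 2 ^ (3 - μ)) * (ε / 2) ^ μ = ε ^ (2:ℕ) * α / 8 := by
        rw [Real.div_rpow hε.le (by norm_num : (0:ℝ) ≤ 2)]
        have h2μ : (0:ℝ) < (2:ℝ) ^ μ := Real.rpow_pos_of_pos (by norm_num) μ
        have h23 : (0:ℝ) < (2:ℝ) ^ (3 - μ) := Real.rpow_pos_of_pos (by norm_num) _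
        have he1 : ε ^ (2 - μ) * ε ^ μ = ε ^ (2:ℕ) := by
          rw [← Real.rpow_add hε, ← Real.rpow_natCast ε 2]; norm_num
        have he2 : (2:ℝ) ^ (3 - μ) * 2 ^ μ = 8 := by
          rw [← Real.rpow_add (by norm_num : (0:ℝ) < 2)]
          norm_num
        rw [div_mul_div_comm, he2, mul_right_comm, he1]
      have hfin : ‖A p - A x‖ ^ 2 + (L * r) ^ 2 ≤ ε ^ 2 / 8 := by
        have hstep2 := mul_le_mul_of_nonneg_right hstep hεμ
        have hα : ε ^ (2:ℕ) * α / 8 ≤ ε ^ 2 / 8 := by nlinarith [sq_nonneg ε]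
        calc ‖A p - A x‖ ^ 2 + (L * r) ^ 2 ≤ _ := hsum
          _ ≤ (ε ^ (2 - μ) * α / 2 ^ (3 - μ)) * (ε / 2) ^ μ := hstep2
          _ = ε ^ (2:ℕ) * α / 8 := hrhs
          _ ≤ ε ^ 2 / 8 := hα
      have htri : ‖(A p + B p) - (A x + B x)‖ ≤ ‖A p - A x‖ + ‖B p - B x‖ := by
        have heq : (A p + B p) - (A x + B x) = (A p - A x) + (B p - B x) := by abel
        rw [heq]; exact norm_add_le _ _
      have hs := norm_nonneg (A p - A x)
      have ht := norm_nonneg (B p - B x)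
      have hLr : 0 ≤ L * r := by positivity
      nlinarith [htri, hB2, hfin, sq_nonneg (‖A p - A x‖ - L * r), hε,
        sq_nonneg (‖A p - A x‖ + L * r + ε / 2)]
  refine ⟨key, ?_⟩
  have heq : γ⁻¹ • (x - p) + (A p + B p) - (A x + B x)
      = γ⁻¹ • (x - p) + ((A p + B p) - (A x + B x)) := by abel
  rw [heq]
  have h1 : ‖γ⁻¹ • (x - p)‖ ≤ ε / 2 := by
    rw [norm_smul, Real.norm_eq_abs, abs_of_pos (inv_pos.mpr hγ)]
    rw [inv_mul_le_iff₀ hγ]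
    calc ‖x - p‖ ≤ γ * ε / 2 := hxp_small
      _ = γ * (ε / 2) := by ring
  calc ‖γ⁻¹ • (x - p) + ((A p + B p) - (A x + B x))‖
      ≤ ‖γ⁻¹ • (x - p)‖ + ‖(A p + B p) - (A x + B x)‖ := norm_add_le _ _
    _ ≤ ε / 2 + ε / 2 := add_le_add h1 key
    _ = ε := by ring
end

section
/- For all x, x' ∈ E and all y, y' ∈ ℝ^m with y_i ≥ 0 and y'_i ≥ 0 for every i, one has ⟨ Σ_{i=1}^m (y_i ∇g_i(x) − y'_i ∇g_i(x')), x − x' ⟩ − Σ_{i=1}^m (g_i(x) − g_i(x'))(y_i − y'_i) ≥ 0; that is, the saddle operator M(x, y) = (Σ_{i=1}^m y_i ∇g_i(x), (−g_i(x))_{1≤i≤m}) is monotone on E × [0, ∞)^m. -/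
open scoped RealInnerProductSpace

/-!
Each summand of the sum is nonnegative: it equals `y i` times the gap in the gradient inequality
`g i x' ≥ g i x + ⟪∇g i x, x' - x⟫` plus `y' i` times the gap in the same inequality with `x` and
`x'` exchanged.
-/

open AffineMap in
theorem ConvexOn.apply_sub_le_sub_of_hasFDerivAt {E : Type*} [NormedAddCommGroup E]
    [NormedSpace ℝ E] {s : Set E} {f : E → ℝ} {f' : E →L[ℝ] ℝ} {x y : E}
    (hf : ConvexOn ℝ s f) (hx : x ∈ s) (hy : y ∈ s) (hf' : HasFDerivAt f f' x) :
    f' (y - x) ≤ f y - f x := by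
  let ℓ : ℝ →ᵃ[ℝ] E := lineMap x y
  have hsegment : ConvexOn ℝ (Set.Icc 0 1) (f ∘ ℓ) :=
    (hf.comp_affineMap ℓ).subset (fun _ ht ↦ hf.1.lineMap_mem hx hy ht) (convex_Icc 0 1)
  have hderiv : HasDerivAt (f ∘ ℓ) (f' (y - x)) 0 := by
    rw [← lineMap_apply_zero (k := ℝ) x y] at hf'
    exact hf'.comp_hasDerivAt 0 hasDerivAt_lineMap
  simpa [ℓ, slope_def_field] using
    hsegment.le_slope_of_hasDerivAt (by simp) (by simp) one_pos hderiv

theorem ConvexOn.sub_mul_sub_le_inner_smul_sub_smul {E : Type*} [NormedAddCommGroup E]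
    [InnerProductSpace ℝ E] {s : Set E} {g : E → ℝ} {u u' x x' : E} {a b : ℝ}
    (hg : ConvexOn ℝ s g) (hx : x ∈ s) (hx' : x' ∈ s)
    (hu : HasFDerivAt g (InnerProductSpace.toDualMap ℝ E u : E →L[ℝ] ℝ) x)
    (hu' : HasFDerivAt g (InnerProductSpace.toDualMap ℝ E u' : E →L[ℝ] ℝ) x')
    (ha : 0 ≤ a) (hb : 0 ≤ b) :
    (g x - g x') * (a - b) ≤ ⟪a • u - b • u', x - x'⟫ := by
  have hle : g x - g x' ≤ ⟪u, x - x'⟫ := by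
    have := hg.apply_sub_le_sub_of_hasFDerivAt hx hx' hu
    rw [InnerProductSpace.toDualMap_apply_apply, ← neg_sub x, inner_neg_right] at this
    linarith
  have hge : ⟪u', x - x'⟫ ≤ g x - g x' := by
    simpa using hg.apply_sub_le_sub_of_hasFDerivAt hx' hx hu'
  rw [inner_sub_left, real_inner_smul_left, real_inner_smul_left]
  nlinarith [mul_le_mul_of_nonneg_left hle ha, mul_le_mul_of_nonneg_left hge hb]

theorem saddle_operator_monotone_general
    {E : Type*} [NormedAddCommGroup E] [InnerProductSpace ℝ E]
    (m : ℕ)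
    (g : Fin m → E → ℝ) (g' : Fin m → E → E)
    (hgrad : ∀ (i : Fin m) (v : E),
      HasFDerivAt (g i) ((InnerProductSpace.toDualMap ℝ E (g' i v) : E →L[ℝ] ℝ)) v)
    (hconv : ∀ i : Fin m, ConvexOn ℝ Set.univ (g i)) :
    ∀ (x x' : E) (y y' : Fin m → ℝ),
      (∀ i, 0 ≤ y i) → (∀ i, 0 ≤ y' i) →
      0 ≤ ⟪∑ i, (y i • g' i x - y' i • g' i x'), x - x'⟫
            - ∑ i, (g i x - g i x') * (y i - y' i) := by
  intro x x' y y' hy hy'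
  rw [sum_inner, ← Finset.sum_sub_distrib]
  refine Finset.sum_nonneg fun i _ ↦ sub_nonneg.mpr ?_
  exact (hconv i).sub_mul_sub_le_inner_smul_sub_smul (Set.mem_univ x) (Set.mem_univ x')
    (hgrad i x) (hgrad i x') (hy i) (hy' i)

theorem saddle_operator_monotone
    {E : Type*} [NormedAddCommGroup E] [InnerProductSpace ℝ E]
    (m : ℕ) (hm : 0 < m)
    (g : Fin m → E → ℝ) (g' : Fin m → E → E)
    (hgrad : ∀ (i : Fin m) (v : E),
      HasFDerivAt (g i) ((InnerProductSpace.toDualMap ℝ E (g' i v) : E →L[ℝ] ℝ)) v)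
    (hconv : ∀ i : Fin m, ConvexOn ℝ Set.univ (g i)) :
    ∀ (x x' : E) (y y' : Fin m → ℝ),
      (∀ i, 0 ≤ y i) → (∀ i, 0 ≤ y' i) →
      0 ≤ ⟪∑ i, (y i • g' i x - y' i • g' i x'), x - x'⟫
            - ∑ i, (g i x - g i x') * (y i - y' i) :=
  saddle_operator_monotone_general m g g' hgrad hconv
end

section
/- For all x, x̄ ∈ E and y, ȳ ∈ ℝ, setting Δ = √(‖x − x̄‖² + (y − ȳ)²), one has ‖y∇g(x) − ȳ∇g(x̄)‖² + (g(x̄) − g(x))² ≤ 2‖∇g(x)‖²·Δ² + 4 L_g²·Δ^{2+2ν} + 4 L_g²·y²·Δ^{2ν}. (The left-hand side equals ‖A(x,y) − A(x̄,ȳ)‖² for the operator A(x,y) = (y∇g(x), −g(x)) on E × ℝ with the ℓ²-product norm.) -/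
set_option maxHeartbeats 1000000 in
theorem generalized_lipschitz_saddle_holder
    {E : Type*} [NormedAddCommGroup E] [InnerProductSpace ℝ E]
    (ν Lg : ℝ) (hν0 : 0 < ν) (hν1 : ν ≤ 1) (hLg : 0 < Lg)
    (g : E → ℝ) (g' : E → E)
    (hgrad : ∀ v : E,
      HasFDerivAt g ((InnerProductSpace.toDualMap ℝ E (g' v) : E →L[ℝ] ℝ)) v)
    (hHolder : ∀ v w : E, ‖g' v - g' w‖ ≤ Lg * ‖v - w‖ ^ ν) :
    ∀ (x xb : E) (y yb : ℝ),
      ‖y • g' x - yb • g' xb‖ ^ 2 + (g xb - g x) ^ 2 ≤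
        2 * ‖g' x‖ ^ 2 * Real.sqrt (‖x - xb‖ ^ 2 + (y - yb) ^ 2) ^ 2
          + 4 * Lg ^ 2 * Real.sqrt (‖x - xb‖ ^ 2 + (y - yb) ^ 2) ^ (2 + 2 * ν)
          + 4 * Lg ^ 2 * y ^ 2 * Real.sqrt (‖x - xb‖ ^ 2 + (y - yb) ^ 2) ^ (2 * ν) := by
  intro x xb y yb
  set d : ℝ := ‖x - xb‖ with hd_def
  set t : ℝ := y - yb with ht_def
  set D : ℝ := Real.sqrt (d ^ 2 + t ^ 2) with hD_def
  set a : ℝ := ‖g' x‖ with ha_def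
  have ha0 : 0 ≤ a := norm_nonneg _
  have hd0 : 0 ≤ d := norm_nonneg _
  have hD0 : 0 ≤ D := Real.sqrt_nonneg _
  have hD2 : D ^ 2 = d ^ 2 + t ^ 2 := Real.sq_sqrt (by positivity)
  have hdD : d ≤ D := by nlinarith [sq_nonneg (D - d), sq_nonneg t]
  set p : ℝ := d ^ ν with hp_def
  set P : ℝ := D ^ ν with hP_def
  have hp0 : 0 ≤ p := Real.rpow_nonneg hd0 _
  have hP0 : 0 ≤ P := Real.rpow_nonneg hD0 _
  have hpP : p ≤ P := Real.rpow_le_rpow hd0 hdD hν0.le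
  -- key 1
  have key1 : ‖y • g' x - yb • g' xb‖ ≤ |t| * a + |yb| * (Lg * p) := by
    have hsplit : y • g' x - yb • g' xb = t • g' x + yb • (g' x - g' xb) := by
      rw [ht_def, sub_smul, smul_sub]; abel
    rw [hsplit]
    have h1 := norm_add_le (t • g' x) (yb • (g' x - g' xb))
    rw [norm_smul, norm_smul, Real.norm_eq_abs, Real.norm_eq_abs] at h1
    refine h1.trans ?_
    have h2 : ‖g' x - g' xb‖ ≤ Lg * p := hHolder x xb
    have := mul_le_mul_of_nonneg_left h2 (abs_nonneg yb)
    linarith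
  -- key 2 : mean value inequality on the segment
  have key2 : |g xb - g x| ≤ (a + Lg * p) * d := by
    have hbound : ∀ v ∈ segment ℝ x xb,
        ‖((InnerProductSpace.toDualMap ℝ E (g' v) : E →L[ℝ] ℝ))‖ ≤ a + Lg * p := by
      intro v hv
      rw [segment_eq_image'] at hv
      obtain ⟨θ, ⟨hθ0, hθ1⟩, rfl⟩ := hv
      have hvx : ‖x + θ • (xb - x) - x‖ ≤ d := by
        rw [add_sub_cancel_left, norm_smul, Real.norm_eq_abs, abs_of_nonneg hθ0]
        calc θ * ‖xb - x‖ ≤ 1 * ‖xb - x‖ := by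
              exact mul_le_mul_of_nonneg_right hθ1 (norm_nonneg _)
          _ = d := by rw [one_mul, hd_def, norm_sub_rev]
      have hnorm : ‖((InnerProductSpace.toDualMap ℝ E (g' (x + θ • (xb - x))) : E →L[ℝ] ℝ))‖
          = ‖g' (x + θ • (xb - x))‖ := (InnerProductSpace.toDualMap ℝ E).norm_map _
      rw [hnorm]
      have h3 : ‖g' (x + θ • (xb - x))‖ ≤ a + ‖g' (x + θ • (xb - x)) - g' x‖ := by
        have := norm_add_le (g' x) (g' (x + θ • (xb - x)) - g' x)
        rw [add_sub_cancel] at this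
        linarith
      have h4 : ‖g' (x + θ • (xb - x)) - g' x‖ ≤ Lg * p := by
        refine (hHolder _ x).trans ?_
        have : ‖x + θ • (xb - x) - x‖ ^ ν ≤ p :=
          Real.rpow_le_rpow (norm_nonneg _) hvx hν0.le
        exact mul_le_mul_of_nonneg_left this hLg.le
      linarith
    have hmvt := Convex.norm_image_sub_le_of_norm_hasFDerivWithin_le
      (fun v _ => (hgrad v).hasFDerivWithinAt) hbound (convex_segment x xb)
      (left_mem_segment ℝ x xb) (right_mem_segment ℝ x xb)
    rw [Real.norm_eq_abs] at hmvt
    refine hmvt.trans ?_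
    rw [show ‖xb - x‖ = d by rw [hd_def, norm_sub_rev]]
  -- rewrite rpow exponents
  have hD2ν : D ^ (2 * ν) = P ^ 2 := by
    rw [mul_comm, Real.rpow_mul hD0, hP_def,
      show (2 : ℝ) = ((2 : ℕ) : ℝ) by norm_num, Real.rpow_natCast]
  have hD22ν : D ^ (2 + 2 * ν) = D ^ 2 * P ^ 2 := by
    rw [Real.rpow_add' hD0 (by positivity), hD2ν,
      show (2 : ℝ) = ((2 : ℕ) : ℝ) by norm_num, Real.rpow_natCast]
  rw [hD2ν, hD22ν]
  -- squared versions
  have h1sq : ‖y • g' x - yb • g' xb‖ ^ 2 ≤ (|t| * a + |yb| * (Lg * p)) ^ 2 :=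
    pow_le_pow_left₀ (norm_nonneg _) key1 2
  have h2sq : (g xb - g x) ^ 2 ≤ ((a + Lg * p) * d) ^ 2 := by
    have := pow_le_pow_left₀ (abs_nonneg _) key2 2
    rwa [sq_abs] at this
  have e1 : (|t| * a + |yb| * (Lg * p)) ^ 2 ≤ 2 * t ^ 2 * a ^ 2 + 2 * yb ^ 2 * (Lg ^ 2 * p ^ 2) := by
    have e1' : (|t| * a + |yb| * (Lg * p)) ^ 2 ≤
        2 * |t| ^ 2 * a ^ 2 + 2 * |yb| ^ 2 * (Lg ^ 2 * p ^ 2) := by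
      nlinarith [sq_nonneg (|t| * a - |yb| * (Lg * p))]
    rwa [sq_abs, sq_abs] at e1'
  have e2 : ((a + Lg * p) * d) ^ 2 ≤ 2 * a ^ 2 * d ^ 2 + 2 * Lg ^ 2 * p ^ 2 * d ^ 2 := by
    nlinarith [sq_nonneg ((a - Lg * p) * d)]
  have e3 : yb ^ 2 ≤ 2 * y ^ 2 + 2 * t ^ 2 := by
    rw [ht_def]
    nlinarith [sq_nonneg (2 * y - yb)]
  have e5 : p ^ 2 ≤ P ^ 2 := pow_le_pow_left₀ hp0 hpP 2
  have hy1 : Lg ^ 2 * y ^ 2 * p ^ 2 ≤ Lg ^ 2 * y ^ 2 * P ^ 2 :=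
    mul_le_mul_of_nonneg_left e5 (by positivity)
  have hy2 : Lg ^ 2 * t ^ 2 * p ^ 2 ≤ Lg ^ 2 * t ^ 2 * P ^ 2 :=
    mul_le_mul_of_nonneg_left e5 (by positivity)
  have hy3 : Lg ^ 2 * d ^ 2 * p ^ 2 ≤ Lg ^ 2 * d ^ 2 * P ^ 2 :=
    mul_le_mul_of_nonneg_left e5 (by positivity)
  have hy4 : Lg ^ 2 * p ^ 2 * yb ^ 2 ≤ Lg ^ 2 * p ^ 2 * (2 * y ^ 2 + 2 * t ^ 2) :=
    mul_le_mul_of_nonneg_left e3 (by positivity)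
  have hy5 : 0 ≤ Lg ^ 2 * d ^ 2 * P ^ 2 := by positivity
  have hA : a ^ 2 * D ^ 2 = a ^ 2 * d ^ 2 + a ^ 2 * t ^ 2 := by rw [hD2]; ring
  have hB : Lg ^ 2 * (D ^ 2 * P ^ 2) = Lg ^ 2 * d ^ 2 * P ^ 2 + Lg ^ 2 * t ^ 2 * P ^ 2 := by rw [hD2]; ring
  clear_value d t D a p P
  linarith [h1sq, h2sq, e1, e2, hy1, hy2, hy3, hy4, hy5, hA, hB]
end

section
/- For all x, x̄ ∈ E and y, ȳ ∈ ℝ^m, setting Δ² = ‖x − x̄‖² + ‖y − ȳ‖², one has ‖ Σ_{i=1}^m (y_i ∇g_i(x) − ȳ_i ∇g_i(x̄)) ‖² + Σ_{i=1}^m (g_i(x̄) − g_i(x))² ≤ a(x, y)·Δ² + b·Δ⁴, where b = (5/2)·Σ_{i=1}^m L_{g_i}², ρ(x, y) = 2·max{ m·max_{1≤i≤m} ‖∇g_i(x)‖², (Σ_{i=1}^m L_{g_i}|y_i|)² }, and a(x, y) = 2·( ρ(x, y) + Σ_{i=1}^m ‖∇g_i(x)‖² ). -/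
/-!
Write `y i • ∇gᵢ(x) - ȳ i • ∇gᵢ(x̄)` as
`(y i - ȳ i) • ∇gᵢ(x) + y i • (∇gᵢ(x) - ∇gᵢ(x̄)) + (ȳ i - y i) • (∇gᵢ(x) - ∇gᵢ(x̄))`.
By Cauchy–Schwarz and the Lipschitz bounds the three sums have norms at most
`√(∑ ‖∇gᵢ(x)‖²) ‖y - ȳ‖`, `(∑ Lᵢ |yᵢ|) ‖x - x̄‖` and `√(∑ Lᵢ²) ‖x - x̄‖ ‖y - ȳ‖`.
The function values are controlled by the first-order Taylor bound
`|gᵢ(x̄) - gᵢ(x)| ≤ ‖∇gᵢ(x)‖ ‖x - x̄‖ + Lᵢ ‖x - x̄‖²`, the mean value inequality for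
`gᵢ - ⟪∇gᵢ(x), ·⟫` on a ball around `x`. Squaring with `(a + b)² ≤ 2a² + 2b²` and using
`∑ ‖∇gᵢ(x)‖² ≤ m · maxᵢ ‖∇gᵢ(x)‖²` leaves an inequality between polynomials in
`‖x - x̄‖²` and `‖y - ȳ‖²`.
-/

open Finset InnerProductSpace

section Taylor

variable {E F : Type*} [NormedAddCommGroup E] [NormedSpace ℝ E]
  [NormedAddCommGroup F] [NormedSpace ℝ F]

theorem norm_sub_sub_fderiv_le_of_lipschitz_fderiv {f : E → F} {f' : E → E →L[ℝ] F} {L : ℝ}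
    {x : E} (hL : 0 ≤ L) (hf : ∀ z, HasFDerivAt f (f' z) z)
    (hf' : ∀ z, ‖f' z - f' x‖ ≤ L * ‖z - x‖) (y : E) :
    ‖f y - f x - f' x (y - x)‖ ≤ L * ‖y - x‖ ^ 2 := by
  have hy : y ∈ Metric.closedBall x ‖y - x‖ := by simp [dist_eq_norm]
  calc ‖f y - f x - f' x (y - x)‖ ≤ L * ‖y - x‖ * ‖y - x‖ :=
        (convex_closedBall x ‖y - x‖).norm_image_sub_le_of_norm_hasFDerivWithin_le'
          (fun z _ => (hf z).hasFDerivWithinAt)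
          (fun z hz => (hf' z).trans <| mul_le_mul_of_nonneg_left
            (by simpa [dist_eq_norm] using hz) hL)
          (Metric.mem_closedBall_self (norm_nonneg _)) hy
    _ = L * ‖y - x‖ ^ 2 := by ring

end Taylor

section Gradient

variable {E : Type*} [NormedAddCommGroup E] [InnerProductSpace ℝ E]

theorem abs_sub_le_of_lipschitz_gradient {g : E → ℝ} {g' : E → E} {L : ℝ} {x : E} (hL : 0 ≤ L)
    (hg : ∀ z, HasFDerivAt g (toDualMap ℝ E (g' z) : E →L[ℝ] ℝ) z)
    (hg' : ∀ z, ‖g' z - g' x‖ ≤ L * ‖z - x‖) (y : E) :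
    |g y - g x| ≤ ‖g' x‖ * ‖y - x‖ + L * ‖y - x‖ ^ 2 := by
  have htaylor : |g y - g x - inner ℝ (g' x) (y - x)| ≤ L * ‖y - x‖ ^ 2 :=
    norm_sub_sub_fderiv_le_of_lipschitz_fderiv hL hg
      (fun z => by rw [← map_sub, LinearIsometry.norm_map]; exact hg' z) y
  have hlin : |inner ℝ (g' x) (y - x)| ≤ ‖g' x‖ * ‖y - x‖ := abs_real_inner_le_norm _ _
  calc |g y - g x| = |(g y - g x - inner ℝ (g' x) (y - x)) + inner ℝ (g' x) (y - x)| := by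
        rw [sub_add_cancel]
    _ ≤ _ := abs_add_le _ _
    _ ≤ _ := by linarith

theorem sum_sq_sub_le_of_lipschitz_gradient {ι : Type*} [Fintype ι] {g : ι → E → ℝ}
    {g' : ι → E → E} {L : ι → ℝ} (hL : ∀ i, 0 ≤ L i)
    (hg : ∀ i z, HasFDerivAt (g i) (toDualMap ℝ E (g' i z) : E →L[ℝ] ℝ) z)
    {x : E} (hg' : ∀ i z, ‖g' i z - g' i x‖ ≤ L i * ‖z - x‖) (y : E) :
    ∑ i, (g i y - g i x) ^ 2 ≤
      2 * (∑ i, ‖g' i x‖ ^ 2) * ‖y - x‖ ^ 2 + 2 * (∑ i, L i ^ 2) * ‖y - x‖ ^ 4 := by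
  calc ∑ i, (g i y - g i x) ^ 2
      ≤ ∑ i, 2 * ((‖g' i x‖ * ‖y - x‖) ^ 2 + (L i * ‖y - x‖ ^ 2) ^ 2) := by
        gcongr with i
        rw [← sq_abs]
        exact (pow_le_pow_left₀ (abs_nonneg _)
          (abs_sub_le_of_lipschitz_gradient (hL i) (hg i) (hg' i) y) 2).trans add_sq_le
    _ = _ := by simp only [mul_sum, ← sum_add_distrib, sum_mul]; congr 1; ext i; ring

end Gradient

section Sums

variable {F : Type*} [NormedAddCommGroup F] [NormedSpace ℝ F]

theorem norm_sum_smul_sq_le {ι : Type*} (s : Finset ι) (c : ι → ℝ) (v : ι → F) :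
    ‖∑ i ∈ s, c i • v i‖ ^ 2 ≤ (∑ i ∈ s, c i ^ 2) * ∑ i ∈ s, ‖v i‖ ^ 2 := by
  calc ‖∑ i ∈ s, c i • v i‖ ^ 2 ≤ (∑ i ∈ s, |c i| * ‖v i‖) ^ 2 := by
        gcongr
        exact (norm_sum_le _ _).trans_eq (by simp only [norm_smul, Real.norm_eq_abs])
    _ ≤ (∑ i ∈ s, |c i| ^ 2) * ∑ i ∈ s, ‖v i‖ ^ 2 := sum_mul_sq_le_sq_mul_sq _ _ _
    _ = _ := by simp only [sq_abs]

theorem norm_sum_smul_sub_smul_sq_le {ι : Type*} [Fintype ι] {u v : ι → F} {L : ι → ℝ} {d : ℝ}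
    (huv : ∀ i, ‖u i - v i‖ ≤ L i * d) (y yb : EuclideanSpace ℝ ι) :
    ‖∑ i, (y i • u i - yb i • v i)‖ ^ 2 ≤
      4 * (∑ i, ‖u i‖ ^ 2) * ‖y - yb‖ ^ 2 + 4 * ((∑ i, L i * |y i|) * d) ^ 2
        + 2 * (∑ i, L i ^ 2) * d ^ 2 * ‖y - yb‖ ^ 2 := by
  set a := ∑ i, (y i - yb i) • u i
  set b := ∑ i, y i • (u i - v i)
  set c := ∑ i, (yb i - y i) • (u i - v i)
  have hsplit : ∑ i, (y i • u i - yb i • v i) = a + b + c := by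
    simp only [a, b, c, ← sum_add_distrib, smul_sub, sub_smul]
    congr 1; ext i; abel
  have hy : ∑ i, (y i - yb i) ^ 2 = ‖y - yb‖ ^ 2 := by
    simp only [EuclideanSpace.real_norm_sq_eq, PiLp.sub_apply]
  have hyb : ∑ i, (yb i - y i) ^ 2 = ‖y - yb‖ ^ 2 := by
    simp only [norm_sub_rev y, EuclideanSpace.real_norm_sq_eq, PiLp.sub_apply]
  have ha : ‖a‖ ^ 2 ≤ (∑ i, ‖u i‖ ^ 2) * ‖y - yb‖ ^ 2 :=
    (norm_sum_smul_sq_le _ _ _).trans_eq (by rw [hy, mul_comm])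
  have hb : ‖b‖ ≤ (∑ i, L i * |y i|) * d :=
    calc ‖b‖ ≤ ∑ i, |y i| * ‖u i - v i‖ :=
          (norm_sum_le _ _).trans_eq (by simp only [norm_smul, Real.norm_eq_abs])
      _ ≤ ∑ i, |y i| * (L i * d) := by gcongr with i; exact huv i
      _ = _ := by rw [sum_mul]; congr 1; ext i; ring
  have hc : ‖c‖ ^ 2 ≤ (∑ i, L i ^ 2) * d ^ 2 * ‖y - yb‖ ^ 2 :=
    calc ‖c‖ ^ 2 ≤ (∑ i, (yb i - y i) ^ 2) * ∑ i, ‖u i - v i‖ ^ 2 := norm_sum_smul_sq_le _ _ _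
      _ = ‖y - yb‖ ^ 2 * ∑ i, ‖u i - v i‖ ^ 2 := by rw [hyb]
      _ ≤ ‖y - yb‖ ^ 2 * ∑ i, (L i * d) ^ 2 := by gcongr with i; exact huv i
      _ = _ := by simp only [mul_pow, ← sum_mul]; ring
  calc ‖∑ i, (y i • u i - yb i • v i)‖ ^ 2 ≤ ((‖a‖ + ‖b‖) + ‖c‖) ^ 2 := by
        rw [hsplit]; gcongr; exact norm_add₃_le
    _ ≤ 2 * (2 * (‖a‖ ^ 2 + ‖b‖ ^ 2) + ‖c‖ ^ 2) := by
        refine add_sq_le.trans ?_; gcongr; exact add_sq_le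
    _ ≤ _ := by linarith [pow_le_pow_left₀ (norm_nonneg b) hb 2]

theorem sum_le_card_mul_ciSup {ι : Type*} [Fintype ι] (f : ι → ℝ) :
    ∑ i, f i ≤ Fintype.card ι * ⨆ i, f i := by
  simpa [nsmul_eq_mul] using
    sum_le_card_nsmul univ f _ fun i _ => le_ciSup (Set.finite_range f).bddAbove i

end Sums

theorem generalized_lipschitz_saddle_multi_general
    {E : Type*} [NormedAddCommGroup E] [InnerProductSpace ℝ E]
    (m : ℕ)
    (g : Fin m → E → ℝ) (g' : Fin m → E → E)
    (Lg : Fin m → ℝ) (hLg : ∀ i, 0 < Lg i)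
    (hgrad : ∀ (i : Fin m) (v : E),
      HasFDerivAt (g i) ((InnerProductSpace.toDualMap ℝ E (g' i v) : E →L[ℝ] ℝ)) v)
    (hLip : ∀ (i : Fin m) (v w : E), ‖g' i v - g' i w‖ ≤ Lg i * ‖v - w‖) :
    ∀ (x xb : E) (y yb : EuclideanSpace ℝ (Fin m)),
      ‖∑ i, (y i • g' i x - yb i • g' i xb)‖ ^ 2 + ∑ i, (g i xb - g i x) ^ 2 ≤
        2 * (2 * max ((m : ℝ) * ⨆ i : Fin m, ‖g' i x‖ ^ 2) ((∑ i, Lg i * |y i|) ^ 2)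
              + ∑ i, ‖g' i x‖ ^ 2) * (‖x - xb‖ ^ 2 + ‖y - yb‖ ^ 2)
          + (5 / 2 * ∑ i, Lg i ^ 2) * (‖x - xb‖ ^ 2 + ‖y - yb‖ ^ 2) ^ 2 := by
  intro x xb y yb
  have hvec := norm_sum_smul_sub_smul_sq_le (fun i => hLip i x xb) y yb
  have hfun := sum_sq_sub_le_of_lipschitz_gradient (fun i => (hLg i).le) hgrad
    (fun i z => hLip i z x) xb
  rw [norm_sub_rev xb x] at hfun
  set d := ‖x - xb‖
  set e := ‖y - yb‖
  set G := ∑ i, ‖g' i x‖ ^ 2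
  set K := max ((m : ℝ) * ⨆ i : Fin m, ‖g' i x‖ ^ 2) ((∑ i, Lg i * |y i|) ^ 2)
  have hGK : G ≤ K :=
    ((sum_le_card_mul_ciSup _).trans_eq (by rw [Fintype.card_fin])).trans (le_max_left _ _)
  have hLK : (∑ i, Lg i * |y i|) ^ 2 ≤ K := le_max_right _ _
  set Λ := ∑ i, Lg i ^ 2
  have hG : 0 ≤ G := by positivity
  have hΛ : 0 ≤ Λ := by positivity
  linarith [mul_le_mul_of_nonneg_right hGK (sq_nonneg e),
    mul_le_mul_of_nonneg_right hLK (sq_nonneg d), mul_nonneg hG (sq_nonneg e),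
    mul_nonneg hΛ (pow_nonneg (sq_nonneg d) 2), mul_nonneg hΛ (pow_nonneg (sq_nonneg e) 2),
    mul_nonneg hΛ (mul_nonneg (sq_nonneg d) (sq_nonneg e))]

theorem generalized_lipschitz_saddle_multi
    {E : Type*} [NormedAddCommGroup E] [InnerProductSpace ℝ E]
    (m : ℕ) [NeZero m]
    (g : Fin m → E → ℝ) (g' : Fin m → E → E)
    (Lg : Fin m → ℝ) (hLg : ∀ i, 0 < Lg i)
    (hgrad : ∀ (i : Fin m) (v : E),
      HasFDerivAt (g i) ((InnerProductSpace.toDualMap ℝ E (g' i v) : E →L[ℝ] ℝ)) v)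
    (hLip : ∀ (i : Fin m) (v w : E), ‖g' i v - g' i w‖ ≤ Lg i * ‖v - w‖) :
    ∀ (x xb : E) (y yb : EuclideanSpace ℝ (Fin m)),
      ‖∑ i, (y i • g' i x - yb i • g' i xb)‖ ^ 2 + ∑ i, (g i xb - g i x) ^ 2 ≤
        2 * (2 * max ((m : ℝ) * ⨆ i : Fin m, ‖g' i x‖ ^ 2) ((∑ i, Lg i * |y i|) ^ 2)
              + ∑ i, ‖g' i x‖ ^ 2) * (‖x - xb‖ ^ 2 + ‖y - yb‖ ^ 2)
          + (5 / 2 * ∑ i, Lg i ^ 2) * (‖x - xb‖ ^ 2 + ‖y - yb‖ ^ 2) ^ 2 :=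
  generalized_lipschitz_saddle_multi_general m g g' Lg hLg hgrad hLip
end

section
/- For all x, y ∈ E with 0 < ‖x‖ ≤ 1 and 0 < ‖y‖ ≤ 1: if ⟨F(x), y − x⟩ ≥ 0 then ⟨F(y), y − x⟩ ≥ ‖y − x‖². In other words, F is strongly pseudo-monotone on the punctured closed unit ball. -/
open scoped RealInnerProductSpace

theorem strongly_pseudo_monotone_example
    {E : Type*} [NormedAddCommGroup E] [InnerProductSpace ℝ E] :
    ∀ x y : E, 0 < ‖x‖ → ‖x‖ ≤ 1 → 0 < ‖y‖ → ‖y‖ ≤ 1 →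
      0 ≤ ⟪(2 / ‖x‖ - 1) • x, y - x⟫ →
      ‖y - x‖ ^ 2 ≤ ⟪(2 / ‖y‖ - 1) • y, y - x⟫ := by
  intro x y hx0 hx1 hy0 hy1 h
  rw [real_inner_smul_left] at h ⊢
  have hcx : (2:ℝ) ≤ 2 / ‖x‖ := by rw [le_div_iff₀ hx0]; linarith
  have hcy : (2:ℝ) ≤ 2 / ‖y‖ := by rw [le_div_iff₀ hy0]; linarith
  have hJ : ⟪y, y - x⟫ = ⟪x, y - x⟫ + ‖y - x‖ ^ 2 := by
    rw [← real_inner_self_eq_norm_sq]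
    rw [← inner_add_left]
    congr 1
    abel
  have hc : (0:ℝ) < 2 / ‖x‖ - 1 := by linarith
  have hI : 0 ≤ ⟪x, y - x⟫ := by
    by_contra hI'
    push_neg at hI'
    nlinarith [mul_pos hc (neg_pos.mpr hI')]
  have hS : (0:ℝ) ≤ ‖y - x‖ ^ 2 := sq_nonneg _
  have hJn : (0:ℝ) ≤ ⟪y, y - x⟫ := by linarith
  have key := mul_le_mul_of_nonneg_right (by linarith : (1:ℝ) ≤ 2 / ‖y‖ - 1) hJn
  rw [one_mul] at key
  linarith
end

section
/- For all x, x̄ ∈ D = {x ∈ E : ⟨d, x⟩ ≥ 0}, the gradient of f satisfies ‖∇f(x) − ∇f(x̄)‖² ≤ (12‖d‖⁴/d₀⁶)·‖Q‖²·‖x̄ − x‖⁶ + 12·( (‖d‖²/d₀³)·‖h‖ + (‖d‖/d₀²)·‖Q‖ )²·‖x̄ − x‖⁴ + 3·( ‖Q‖/d₀ + (2‖d‖²/d₀³)·(‖Q‖·‖x‖² + |⟨h, x⟩ − h₀|) + (2‖d‖/d₀²)·‖Q x − h‖ )²·‖x̄ − x‖². -/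
open scoped RealInnerProductSpace

/-!
On `D` the denominator `w(x) = ⟪d, x⟫ + d₀` is at least `d₀`, and the quotient rule gives
`∇f(x) = w(x)⁻¹ • (Q x - h) - (n(x) / w(x)²) • d` for the numerator `n`. Writing `x̄ = x + s`,
the difference `∇f(x) - ∇f(x̄)` splits into four terms controlled by `w(x̄) - w(x) = ⟪d, s⟫`,
`Q x̄ - Q x = Q s`, `|n(x)|` and `n(x̄) - n(x) = ⟪Q x - h, s⟫ + ½⟪s, Q s⟫`, which yields
`‖∇f(x) - ∇f(x̄)‖ ≤ C ‖s‖ + (‖d‖ ‖Q‖ / 2d₀²) ‖s‖²`, with `C` the bracketed factor of the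
last term of the bound. Squaring with `(a + b)² ≤ 2a² + 2b²` gives
the claimed bound even without its `‖x̄ - x‖⁶` term.
-/

theorem HasGradientAt.div {F : Type*} [NormedAddCommGroup F] [InnerProductSpace ℝ F]
    [CompleteSpace F] {u v : F → ℝ} {u' v' x : F} (hu : HasGradientAt u u' x)
    (hv : HasGradientAt v v' x) (hx : v x ≠ 0) :
    HasGradientAt (fun y => u y / v y) ((v x)⁻¹ • u' - (u x / v x ^ 2) • v') x := by
  rw [hasGradientAt_iff_hasFDerivAt] at *
  simp only [div_eq_mul_inv]
  refine (hu.mul ((hasDerivAt_inv hx).comp_hasFDerivAt x hv)).congr_fderiv ?_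
  ext y
  simp only [neg_smul, smul_neg, Function.comp_apply, add_apply, neg_apply, smul_apply,
    InnerProductSpace.toDual_apply_apply, smul_eq_mul, map_sub, map_smul, sub_apply]
  ring

theorem abs_inv_sub_inv_le {c a b : ℝ} (hc : 0 < c) (ha : c ≤ a) (hb : c ≤ b) :
    |a⁻¹ - b⁻¹| ≤ |b - a| / c ^ 2 := by
  have ha₀ : 0 < a := hc.trans_le ha
  have hb₀ : 0 < b := hc.trans_le hb
  rw [inv_sub_inv ha₀.ne' hb₀.ne', abs_div, abs_of_pos (mul_pos ha₀ hb₀), sq]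
  gcongr

theorem abs_inv_sq_sub_inv_sq_le {c a b : ℝ} (hc : 0 < c) (ha : c ≤ a) (hb : c ≤ b) :
    |(a ^ 2)⁻¹ - (b ^ 2)⁻¹| ≤ 2 * |b - a| / c ^ 3 := by
  have ha₀ : 0 < a := hc.trans_le ha
  have hb₀ : 0 < b := hc.trans_le hb
  have hsum : a⁻¹ + b⁻¹ ≤ 2 / c := by
    have := inv_anti₀ hc ha
    have := inv_anti₀ hc hb
    rw [div_eq_mul_inv]; linarith
  calc |(a ^ 2)⁻¹ - (b ^ 2)⁻¹| = |a⁻¹ - b⁻¹| * (a⁻¹ + b⁻¹) := by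
        rw [← abs_of_pos (add_pos (inv_pos.2 ha₀) (inv_pos.2 hb₀)), ← abs_mul]
        congr 1; field_simp; ring
    _ ≤ |b - a| / c ^ 2 * (2 / c) := by
        gcongr
        exact abs_inv_sub_inv_le hc ha hb
    _ = 2 * |b - a| / c ^ 3 := by ring

theorem ContinuousLinearMap.abs_real_inner_self_apply_le {F : Type*} [NormedAddCommGroup F]
    [InnerProductSpace ℝ F] (T : F →L[ℝ] F) (x : F) : |⟪x, T x⟫| ≤ ‖T‖ * ‖x‖ ^ 2 :=
  calc |⟪x, T x⟫| ≤ ‖x‖ * ‖T x‖ := abs_real_inner_le_norm _ _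
    _ ≤ ‖x‖ * (‖T‖ * ‖x‖) := by gcongr; exact T.le_opNorm x
    _ = ‖T‖ * ‖x‖ ^ 2 := by ring

theorem norm_inv_smul_sub_div_sq_smul_sub_le {E : Type*} [NormedAddCommGroup E] [NormedSpace ℝ E]
    {c w w' n n' : ℝ} (hc : 0 < c) (hw : c ≤ w) (hw' : c ≤ w') (g g' d : E) :
    ‖(w⁻¹ • g - (n / w ^ 2) • d) - (w'⁻¹ • g' - (n' / w' ^ 2) • d)‖ ≤
      |w' - w| / c ^ 2 * ‖g‖ + ‖g' - g‖ / c + 2 * |w' - w| / c ^ 3 * |n| * ‖d‖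
        + |n' - n| / c ^ 2 * ‖d‖ := by
  have hw'₀ : 0 < w' := hc.trans_le hw'
  have split : (w⁻¹ • g - (n / w ^ 2) • d) - (w'⁻¹ • g' - (n' / w' ^ 2) • d) =
      (w⁻¹ - w'⁻¹) • g - w'⁻¹ • (g' - g) - (n * ((w ^ 2)⁻¹ - (w' ^ 2)⁻¹)) • d
        + ((n' - n) / w' ^ 2) • d := by
    simp only [div_eq_mul_inv]; module
  rw [split]
  refine norm_add_le_of_le (norm_sub_le_of_le (norm_sub_le_of_le ?_ ?_) ?_) ?_ <;>
    rw [norm_smul, Real.norm_eq_abs]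
  · gcongr; exact abs_inv_sub_inv_le hc hw hw'
  · rw [abs_inv, abs_of_pos hw'₀, inv_mul_eq_div]
    gcongr
  · rw [abs_mul, mul_comm |n|]
    gcongr
    exact abs_inv_sq_sub_inv_sq_le hc hw hw'
  · rw [abs_div, abs_of_pos (pow_pos hw'₀ 2)]
    gcongr

namespace QuadraticFractional

variable {E : Type*} [NormedAddCommGroup E] [InnerProductSpace ℝ E]
  (Q : E →L[ℝ] E) (h : E) (h₀ : ℝ) (d : E) (d₀ : ℝ)

noncomputable def num (x : E) : ℝ := 1 / 2 * ⟪x, Q x⟫ - ⟪h, x⟫ + h₀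

noncomputable def den (x : E) : ℝ := ⟪d, x⟫ + d₀

noncomputable def grad (x : E) : E :=
  (den d d₀ x)⁻¹ • (Q x - h) - (num Q h h₀ x / den d d₀ x ^ 2) • d

theorem abs_num_le (x : E) : |num Q h h₀ x| ≤ ‖Q‖ * ‖x‖ ^ 2 + |⟪h, x⟫ - h₀| := by
  have := Q.abs_real_inner_self_apply_le x
  calc |num Q h h₀ x| = |1 / 2 * ⟪x, Q x⟫ - (⟪h, x⟫ - h₀)| := by rw [num]; ring_nf
    _ ≤ 1 / 2 * |⟪x, Q x⟫| + |⟪h, x⟫ - h₀| := by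
        grw [abs_sub, abs_mul, abs_of_pos (by norm_num : (0 : ℝ) < 1 / 2)]
    _ ≤ ‖Q‖ * ‖x‖ ^ 2 + |⟪h, x⟫ - h₀| := by linarith [abs_nonneg ⟪x, Q x⟫]

variable {Q}

theorem hasGradientAt_num [CompleteSpace E] (hQ : (Q : E →ₗ[ℝ] E).IsSymmetric) (x : E) :
    HasGradientAt (num Q h h₀) (Q x - h) x := by
  rw [hasGradientAt_iff_hasFDerivAt]
  have hquad := (hasFDerivAt_id x).inner ℝ Q.hasFDerivAt
  refine (((hquad.const_mul (1 / 2)).sub (innerSL ℝ h).hasFDerivAt).add_const h₀).congr_fderiv ?_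
  ext y
  simp only [one_div, id_eq, sub_apply, smul_apply, ContinuousLinearMap.comp_apply,
    ContinuousLinearMap.prod_apply, ContinuousLinearMap.id_apply, fderivInnerCLM_apply,
    smul_eq_mul, coe_innerSL_apply, map_sub, InnerProductSpace.toDual_apply_apply, sub_left_inj]
  rw [← hQ.apply_clm x y, real_inner_comm (Q x) y]
  ring

theorem hasGradientAt_den [CompleteSpace E] (x : E) : HasGradientAt (den d d₀) d x := by
  rw [hasGradientAt_iff_hasFDerivAt]
  exact ((innerSL ℝ d).hasFDerivAt.add_const d₀).congr_fderiv (by ext; simp)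

theorem hasGradientAt_grad [CompleteSpace E] (hQ : (Q : E →ₗ[ℝ] E).IsSymmetric) {x : E}
    (hx : den d d₀ x ≠ 0) :
    HasGradientAt (fun y => num Q h h₀ y / den d d₀ y) (grad Q h h₀ d d₀ x) x :=
  (hasGradientAt_num h h₀ hQ x).div (hasGradientAt_den d d₀ x) hx

theorem num_add_sub_num (hQ : (Q : E →ₗ[ℝ] E).IsSymmetric) (x s : E) :
    num Q h h₀ (x + s) - num Q h h₀ x = ⟪Q x - h, s⟫ + 1 / 2 * ⟪s, Q s⟫ := by
  simp only [num, map_add, inner_add_left, inner_add_right, inner_sub_left]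
  rw [real_inner_comm (Q x) s, ← hQ.apply_clm x s]
  ring

theorem abs_num_add_sub_num_le (hQ : (Q : E →ₗ[ℝ] E).IsSymmetric) (x s : E) :
    |num Q h h₀ (x + s) - num Q h h₀ x| ≤ ‖Q x - h‖ * ‖s‖ + ‖Q‖ * ‖s‖ ^ 2 / 2 := by
  rw [num_add_sub_num h h₀ hQ]
  have := Q.abs_real_inner_self_apply_le s
  calc |⟪Q x - h, s⟫ + 1 / 2 * ⟪s, Q s⟫| ≤ |⟪Q x - h, s⟫| + 1 / 2 * |⟪s, Q s⟫| := by
        grw [abs_add_le, abs_mul, abs_of_pos (by norm_num : (0 : ℝ) < 1 / 2)]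
    _ ≤ ‖Q x - h‖ * ‖s‖ + ‖Q‖ * ‖s‖ ^ 2 / 2 := by
        linarith [abs_real_inner_le_norm (Q x - h) s]

theorem norm_grad_sub_grad_le (hQ : (Q : E →ₗ[ℝ] E).IsSymmetric) (hd₀ : 0 < d₀) {x s : E}
    (hx : 0 ≤ ⟪d, x⟫) (hxs : 0 ≤ ⟪d, x + s⟫) :
    ‖grad Q h h₀ d d₀ x - grad Q h h₀ d d₀ (x + s)‖ ≤
      (‖Q‖ / d₀ + 2 * ‖d‖ ^ 2 / d₀ ^ 3 * (‖Q‖ * ‖x‖ ^ 2 + |⟪h, x⟫ - h₀|)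
          + 2 * ‖d‖ / d₀ ^ 2 * ‖Q x - h‖) * ‖s‖
        + ‖d‖ / d₀ ^ 2 * ‖Q‖ / 2 * ‖s‖ ^ 2 := by
  have hden : ⟪d, x + s⟫ + d₀ - (⟪d, x⟫ + d₀) = ⟪d, s⟫ := by rw [inner_add_right]; ring
  have hQs : Q (x + s) - h - (Q x - h) = Q s := by rw [map_add]; abel
  have hds := abs_real_inner_le_norm d s
  have hQs_le := Q.le_opNorm s
  have hnum := abs_num_le Q h h₀ x
  have hnum_sub := abs_num_add_sub_num_le h h₀ hQ x s
  calc _ ≤ _ := norm_inv_smul_sub_div_sq_smul_sub_le hd₀ (le_add_of_nonneg_left hx)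
          (le_add_of_nonneg_left hxs) (Q x - h) (Q (x + s) - h) d
    _ ≤ ‖d‖ * ‖s‖ / d₀ ^ 2 * ‖Q x - h‖ + ‖Q‖ * ‖s‖ / d₀
          + 2 * (‖d‖ * ‖s‖) / d₀ ^ 3 * (‖Q‖ * ‖x‖ ^ 2 + |⟪h, x⟫ - h₀|) * ‖d‖
          + (‖Q x - h‖ * ‖s‖ + ‖Q‖ * ‖s‖ ^ 2 / 2) / d₀ ^ 2 * ‖d‖ := by
        rw [hden, hQs]
        gcongr
    _ = (‖Q‖ / d₀ + 2 * ‖d‖ ^ 2 / d₀ ^ 3 * (‖Q‖ * ‖x‖ ^ 2 + |⟪h, x⟫ - h₀|)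
          + 2 * ‖d‖ / d₀ ^ 2 * ‖Q x - h‖) * ‖s‖
        + ‖d‖ / d₀ ^ 2 * ‖Q‖ / 2 * ‖s‖ ^ 2 := by ring

end QuadraticFractional

open QuadraticFractional in
theorem quadratic_fractional_generalized_lipschitz
    {E : Type*} [NormedAddCommGroup E] [InnerProductSpace ℝ E] [FiniteDimensional ℝ E]
    (Q : E →L[ℝ] E) (hQ : ∀ x y : E, ⟪Q x, y⟫ = ⟪x, Q y⟫)
    (d h : E) (d₀ h₀ : ℝ) (hd₀ : 0 < d₀)
    (f : E → ℝ)
    (hf : ∀ x : E, f x = ((1 : ℝ) / 2 * ⟪x, Q x⟫ - ⟪h, x⟫ + h₀) / (⟪d, x⟫ + d₀))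
    (f' : E → E)
    (hgrad : ∀ x : E, -d₀ < ⟪d, x⟫ → HasGradientAt f (f' x) x) :
    ∀ x : E, 0 ≤ ⟪d, x⟫ → ∀ xb : E, 0 ≤ ⟪d, xb⟫ →
      ‖f' x - f' xb‖ ^ 2 ≤
        12 * ‖d‖ ^ 4 / d₀ ^ 6 * ‖Q‖ ^ 2 * ‖xb - x‖ ^ 6
          + 12 * (‖d‖ ^ 2 / d₀ ^ 3 * ‖h‖ + ‖d‖ / d₀ ^ 2 * ‖Q‖) ^ 2 * ‖xb - x‖ ^ 4
          + 3 * (‖Q‖ / d₀ + 2 * ‖d‖ ^ 2 / d₀ ^ 3 * (‖Q‖ * ‖x‖ ^ 2 + |⟪h, x⟫ - h₀|)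
              + 2 * ‖d‖ / d₀ ^ 2 * ‖Q x - h‖) ^ 2 * ‖xb - x‖ ^ 2 := by
  obtain rfl : f = fun y => num Q h h₀ y / den d d₀ y := funext hf
  have hf' : ∀ y, 0 ≤ ⟪d, y⟫ → f' y = grad Q h h₀ d d₀ y := fun y hy =>
    (hgrad y (by linarith)).unique
      (hasGradientAt_grad h h₀ d d₀ hQ (by simp only [den]; positivity))
  intro x hx xb hxb
  obtain ⟨s, rfl⟩ : ∃ s, xb = x + s := ⟨xb - x, by abel⟩
  rw [hf' x hx, hf' _ hxb, add_sub_cancel_left]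
  set C := ‖Q‖ / d₀ + 2 * ‖d‖ ^ 2 / d₀ ^ 3 * (‖Q‖ * ‖x‖ ^ 2 + |⟪h, x⟫ - h₀|)
    + 2 * ‖d‖ / d₀ ^ 2 * ‖Q x - h‖
  set B := ‖d‖ / d₀ ^ 2 * ‖Q‖
  have hB : B / 2 ≤ ‖d‖ ^ 2 / d₀ ^ 3 * ‖h‖ + B := by
    have : 0 ≤ B := by positivity
    linarith [show 0 ≤ ‖d‖ ^ 2 / d₀ ^ 3 * ‖h‖ by positivity]
  calc ‖_‖ ^ 2 ≤ (C * ‖s‖ + B / 2 * ‖s‖ ^ 2) ^ 2 := by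
        gcongr; exact norm_grad_sub_grad_le h h₀ d d₀ hQ hd₀ hx hxb
    _ ≤ 2 * ((C * ‖s‖) ^ 2 + (B / 2 * ‖s‖ ^ 2) ^ 2) := add_sq_le
    _ = 0 + 2 * (B / 2) ^ 2 * ‖s‖ ^ 4 + 2 * C ^ 2 * ‖s‖ ^ 2 := by ring
    _ ≤ _ := by
        gcongr
        · positivity
        all_goals norm_num
end
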